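/- arXiv:2506.07268 — 7 statements merged into one kernel-verified Lean document; each statement's English description precedes it below -/
import Mathlib

section
/- Splitting lemma: for all natural numbers m, k ≥ 1, α(m + k) ≤ α(m) + α(k + 1), where α(n) is the minimum size of a family of finite sets whose generated ideal has exactly n elements. -/
/-- The ideal generated by a finite family of finite sets: the union of their power sets. -/
def idealOf (𝒮 : Finset (Finset ℕ)) : Finset (Finset ℕ) :=
  𝒮.sup Finset.powerset

/-- `alpha n` is the minimum size of a family of finite sets whose generated ideal
has exactly `n` elements. -/
noncomputable def alpha (n : ℕ) : ℕ :=
  sInf {m | ∃ 𝒮 : Finset (Finset ℕ), 𝒮.card = m ∧ (idealOf 𝒮).card = n}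

lemma mem_idealOf {𝒮 : Finset (Finset ℕ)} {A : Finset ℕ} :
    A ∈ idealOf 𝒮 ↔ ∃ S ∈ 𝒮, A ⊆ S := by
  simp [idealOf, Finset.mem_sup, Finset.mem_powerset]

lemma alphaSet_nonempty (n : ℕ) :
    {m | ∃ 𝒮 : Finset (Finset ℕ), 𝒮.card = m ∧ (idealOf 𝒮).card = n}.Nonempty := by
  cases n with
  | zero => exact ⟨0, ∅, by simp [idealOf]⟩
  | succ j =>
    set 𝒮 : Finset (Finset ℕ) := insert ∅ ((Finset.range j).image fun i => ({i} : Finset ℕ))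
      with h𝒮
    have hid : idealOf 𝒮 = 𝒮 := by
      ext A
      rw [mem_idealOf]
      constructor
      · rintro ⟨S, hS, hA⟩
        simp only [h𝒮, Finset.mem_insert, Finset.mem_image, Finset.mem_range] at hS ⊢
        rcases hS with rfl | ⟨i, hi, rfl⟩
        · left; exact Finset.subset_empty.mp hA
        · rcases Finset.subset_singleton_iff.mp hA with rfl | rfl
          · left; rfl
          · right; exact ⟨i, hi, rfl⟩
      · exact fun h => ⟨A, h, subset_rfl⟩
    have hcard : 𝒮.card = j + 1 := by
      rw [h𝒮, Finset.card_insert_of_notMem, Finset.card_image_of_injective _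
        (fun a b h => Finset.singleton_injective h)]
      · simp
      · simp
    exact ⟨j + 1, 𝒮, hcard, by rw [hid, hcard]⟩

lemma idealOf_image (𝒯 : Finset (Finset ℕ)) (f : ℕ → ℕ) :
    idealOf (𝒯.image (Finset.image f)) = (idealOf 𝒯).image (Finset.image f) := by
  ext A
  rw [mem_idealOf, Finset.mem_image]
  constructor
  · rintro ⟨S, hS, hA⟩
    rw [Finset.mem_image] at hS
    obtain ⟨T, hT, rfl⟩ := hS
    obtain ⟨B, hB, rfl⟩ := Finset.subset_image_iff.mp hA
    exact ⟨B, mem_idealOf.mpr ⟨T, hT, hB⟩, rfl⟩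
  · rintro ⟨B, hB, rfl⟩
    obtain ⟨T, hT, hBT⟩ := mem_idealOf.mp hB
    exact ⟨T.image f, Finset.mem_image_of_mem _ hT, Finset.image_subset_image hBT⟩

/-- Splitting lemma. -/
theorem alpha_splitting (m k : ℕ) (hm : 1 ≤ m) (hk : 1 ≤ k) :
    alpha (m + k) ≤ alpha m + alpha (k + 1) := by
  obtain ⟨𝒮, h𝒮card, h𝒮id⟩ := Nat.sInf_mem (alphaSet_nonempty m)
  obtain ⟨𝒯, h𝒯card, h𝒯id⟩ := Nat.sInf_mem (alphaSet_nonempty (k + 1))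
  set N : ℕ := (𝒮.sup id).sup id with hN
  set f : ℕ → ℕ := fun x => x + (N + 1) with hf
  have hfinj : Function.Injective f := fun a b h => by simpa [hf] using h
  set 𝒯' : Finset (Finset ℕ) := 𝒯.image (Finset.image f) with h𝒯'
  -- nonempty families
  have h𝒮ne : 𝒮.Nonempty := by
    by_contra h
    rw [Finset.not_nonempty_iff_eq_empty] at h
    simp [h, idealOf] at h𝒮id
    omega
  have h𝒯ne : 𝒯.Nonempty := by
    by_contra h
    rw [Finset.not_nonempty_iff_eq_empty] at h
    simp [h, idealOf] at h𝒯id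
  -- the ideal of the translated family
  have hid𝒯' : idealOf 𝒯' = (idealOf 𝒯).image (Finset.image f) := idealOf_image 𝒯 f
  have hcard𝒯' : (idealOf 𝒯').card = k + 1 := by
    rw [hid𝒯', Finset.card_image_of_injective _ (Finset.image_injective hfinj), h𝒯id]
  -- union of ideals
  have hU : idealOf (𝒮 ∪ 𝒯') = idealOf 𝒮 ∪ idealOf 𝒯' := Finset.sup_union
  -- intersection is {∅}
  have hI : idealOf 𝒮 ∩ idealOf 𝒯' = {∅} := by
    ext A
    simp only [Finset.mem_inter, Finset.mem_singleton]
    constructor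
    · rintro ⟨hA𝒮, hA𝒯'⟩
      by_contra hA
      obtain ⟨a, ha⟩ := Finset.nonempty_iff_ne_empty.mpr hA
      -- from 𝒮 : a ≤ N
      obtain ⟨S, hS, hAS⟩ := mem_idealOf.mp hA𝒮
      have haN : a ≤ N := by
        have h1 : S ⊆ 𝒮.sup id := Finset.le_sup (f := id) hS
        exact Finset.le_sup (f := id) (h1 (hAS ha))
      -- from 𝒯' : a ≥ N + 1
      rw [hid𝒯', Finset.mem_image] at hA𝒯'
      obtain ⟨B, _, rfl⟩ := hA𝒯'
      rw [Finset.mem_image] at ha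
      obtain ⟨b, _, rfl⟩ := ha
      simp only [hf] at haN
      omega
    · rintro rfl
      obtain ⟨S, hS⟩ := h𝒮ne
      obtain ⟨T, hT⟩ := h𝒯ne
      exact ⟨mem_idealOf.mpr ⟨S, hS, Finset.empty_subset _⟩,
        mem_idealOf.mpr ⟨T.image f, by rw [h𝒯']; exact Finset.mem_image_of_mem _ hT,
          Finset.empty_subset _⟩⟩
  -- card of the union ideal
  have hUcard : (idealOf (𝒮 ∪ 𝒯')).card = m + k := by
    have := Finset.card_union_add_card_inter (idealOf 𝒮) (idealOf 𝒯')
    rw [hI, h𝒮id, hcard𝒯', Finset.card_singleton] at this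
    rw [hU]
    omega
  calc alpha (m + k) ≤ (𝒮 ∪ 𝒯').card := Nat.sInf_le ⟨𝒮 ∪ 𝒯', rfl, hUcard⟩
    _ ≤ 𝒮.card + 𝒯'.card := Finset.card_union_le _ _
    _ ≤ 𝒮.card + 𝒯.card := by
        have := Finset.card_image_le (s := 𝒯) (f := Finset.image f)
        rw [h𝒯']; omega
    _ = alpha m + alpha (k + 1) := by rw [h𝒮card, h𝒯card]; rfl
end

section
/- Let t ∈ ℕ and let x_i, y_i be natural numbers for all i ∈ [t]. If k = Σ_{i∈[t]} (−1)^{x_i} · 2^{y_i} ≥ 1, then bl(k) ≤ t, where bl(k) is the number of maximal blocks of consecutive 1s in the binary representation of k. -/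
/-- The block count of `k`: the number of maximal blocks of consecutive `1`s in
the binary representation of `k`, counted via positions where a `1`-bit is
followed by a `0`-bit. -/
def blockCount (k : ℕ) : ℕ :=
  ((Finset.range (k + 1)).filter fun i => k.testBit i ∧ ¬k.testBit (i + 1)).card

/-- Count of positions `i` with bit `i` = 1 and bit `i+1` = 0 (down transitions). -/
def Ddown : ℕ → ℕ
  | 0 => 0
  | (n+1) =>
    (if (n+1) % 2 = 1 then (if ((n+1)/2) % 2 = 0 then 1 else 0) else 0) + Ddown ((n+1)/2)
decreasing_by exact Nat.div_lt_self (Nat.succ_pos n) one_lt_two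

/-- Count of positions `i ≥ 0` with bit `i` = 0 and bit `i+1` = 1 (up transitions). -/
def Dup : ℕ → ℕ
  | 0 => 0
  | (n+1) =>
    (if (n+1) % 2 = 0 then (if ((n+1)/2) % 2 = 1 then 1 else 0) else 0) + Dup ((n+1)/2)
decreasing_by exact Nat.div_lt_self (Nat.succ_pos n) one_lt_two

/-- Down-transition count of the 2-adic expansion of an integer. -/
def D : ℤ → ℕ
  | .ofNat n => Ddown n
  | .negSucc n => Dup n

lemma Ddown_two_mul (n : ℕ) : Ddown (2*n) = Ddown n := by
  rcases n with _ | m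
  · rfl
  · rw [show 2*(m+1) = (2*m+1)+1 by ring, Ddown]
    have h1 : (2*m+1+1) % 2 = 0 := by omega
    have h2 : (2*m+1+1) / 2 = m + 1 := by omega
    rw [h1, h2]; simp

lemma Ddown_odd (n : ℕ) : Ddown (2*n+1) = (if n % 2 = 0 then 1 else 0) + Ddown n := by
  rw [show 2*n+1 = (2*n)+1 by ring, Ddown]
  have h1 : (2*n+1) % 2 = 1 := by omega
  have h2 : (2*n+1) / 2 = n := by omega
  rw [h1, h2]; simp

lemma Dup_odd (n : ℕ) : Dup (2*n+1) = Dup n := by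
  rw [show 2*n+1 = (2*n)+1 by ring, Dup]
  have h1 : (2*n+1) % 2 = 1 := by omega
  have h2 : (2*n+1) / 2 = n := by omega
  rw [h1, h2]; simp

lemma Dup_two_mul (n : ℕ) : Dup (2*n) = (if n % 2 = 1 then 1 else 0) + Dup n := by
  rcases n with _ | m
  · simp [Dup]
  · rw [show 2*(m+1) = (2*m+1)+1 by ring, Dup]
    have h1 : (2*m+1+1) % 2 = 0 := by omega
    have h2 : (2*m+1+1) / 2 = m + 1 := by omega
    rw [h1, h2]; simp

lemma D_ofNat (n : ℕ) : D (n : ℤ) = Ddown n := rfl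

lemma D_zero : D 0 = 0 := by simp [D, Ddown]

lemma D_neg_one : D (-1) = 0 := by
  show D (Int.negSucc 0) = 0
  simp [D, Dup]

lemma D_two_mul (k : ℤ) : D (2*k) = D k := by
  cases k with
  | ofNat n =>
      have : (2 : ℤ) * Int.ofNat n = ((2*n : ℕ) : ℤ) := by push_cast [Int.ofNat_eq_natCast]; ring
      rw [this, D_ofNat, Ddown_two_mul]; rfl
  | negSucc n =>
      have : (2 : ℤ) * Int.negSucc n = Int.negSucc (2*n+1) := by
        simp [Int.negSucc_eq]; ring
      rw [this]
      show Dup (2*n+1) = Dup n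
      exact Dup_odd n

lemma D_two_mul_add_one (k : ℤ) :
    D (2*k+1) = D k + (if 2 ∣ k then 1 else 0) := by
  cases k with
  | ofNat n =>
      have : (2 : ℤ) * Int.ofNat n + 1 = ((2*n+1 : ℕ) : ℤ) := by
        push_cast [Int.ofNat_eq_natCast]; ring
      rw [this, D_ofNat, Ddown_odd]
      have h : (2 ∣ (Int.ofNat n)) ↔ n % 2 = 0 := by
        rw [Int.ofNat_eq_natCast]; omega
      rw [if_congr h rfl rfl]
      show _ = Ddown n + _
      ring
  | negSucc n =>
      have : (2 : ℤ) * Int.negSucc n + 1 = Int.negSucc (2*n) := by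
        simp [Int.negSucc_eq]; ring
      rw [this]
      show Dup (2*n) = Dup n + _
      rw [Dup_two_mul]
      have : (2 ∣ (Int.negSucc n)) ↔ n % 2 = 1 := by
        rw [Int.negSucc_eq]
        omega
      rw [if_congr this rfl rfl]; ring

lemma D_add_one_of_odd : ∀ (k : ℤ), ¬ 2 ∣ k → D (k+1) ≤ D k := by
  suffices h : ∀ n : ℕ, ∀ k : ℤ, k.natAbs ≤ n → ¬ 2 ∣ k → D (k+1) ≤ D k by
    intro k hk; exact h k.natAbs k le_rfl hk
  intro n
  induction n with
  | zero => intro k hk hodd; exfalso; omega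
  | succ n ih =>
    intro k hkn hodd
    obtain ⟨m, hm | hm⟩ := Int.even_or_odd' k
    · exact absurd ⟨m, hm⟩ hodd
    · subst hm
      by_cases hm1 : m = -1
      · subst hm1
        rw [show (2*(-1:ℤ)+1+1) = 0 by ring, D_zero]
        exact Nat.zero_le _
      · rw [show (2*m+1+1) = 2*(m+1) by ring, D_two_mul, D_two_mul_add_one]
        by_cases he : 2 ∣ m
        · obtain ⟨c, rfl⟩ := he
          rw [show (2*c+1 : ℤ) = 2*c+1 by ring, D_two_mul_add_one, D_two_mul]
          simp only [if_pos (dvd_mul_right 2 c : (2:ℤ) ∣ 2*c)]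
          by_cases hc : 2 ∣ c <;> simp [hc]
        · have h := ih m (by omega) he
          simp only [if_neg he]
          omega

lemma D_sub_one_of_odd (k : ℤ) (hodd : ¬ 2 ∣ k) : D (k-1) ≤ D k := by
  obtain ⟨m, hm | hm⟩ := Int.even_or_odd' k
  · exact absurd ⟨m, hm⟩ hodd
  · subst hm
    rw [show (2*m+1-1) = 2*m by ring, D_two_mul, D_two_mul_add_one]
    by_cases he : 2 ∣ m <;> simp [he]

lemma D_add_one (k : ℤ) : D (k+1) ≤ D k + 1 := by
  obtain ⟨m, hm | hm⟩ := Int.even_or_odd' k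
  · subst hm
    rw [show (2*m+1) = 2*m+1 by ring, D_two_mul_add_one, D_two_mul]
    by_cases he : 2 ∣ m <;> simp [he]
  · subst hm
    rw [show (2*m+1+1) = 2*(m+1) by ring, D_two_mul]
    by_cases he : 2 ∣ m
    · rw [D_two_mul_add_one]
      obtain ⟨c, rfl⟩ := he
      rw [D_two_mul_add_one, D_two_mul]
      simp only [if_pos (dvd_mul_right 2 c : (2:ℤ) ∣ 2*c)]
      by_cases hc : 2 ∣ c <;> simp [hc] <;> omega
    · have h := D_add_one_of_odd m he
      rw [D_two_mul_add_one]
      simp only [if_neg he]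
      omega

lemma D_sub_one : ∀ (k : ℤ), D (k-1) ≤ D k + 1 := by
  suffices h : ∀ n : ℕ, ∀ k : ℤ, k.natAbs ≤ n → D (k-1) ≤ D k + 1 by
    intro k; exact h k.natAbs k le_rfl
  intro n
  induction n with
  | zero =>
    intro k hk
    have : k = 0 := by omega
    subst this
    rw [show (0:ℤ)-1 = -1 by ring, D_neg_one]
    exact Nat.zero_le _
  | succ n ih =>
    intro k hkn
    obtain ⟨c, hc | hc⟩ := Int.even_or_odd' k
    · subst hc
      by_cases hc0 : c = 0
      · subst hc0
        rw [show (2*(0:ℤ)-1) = -1 by ring, D_neg_one]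
        exact Nat.zero_le _
      · rw [show (2*c-1) = 2*(c-1)+1 by ring, D_two_mul_add_one, D_two_mul]
        by_cases he : 2 ∣ c
        · have h1 : ¬ (2 ∣ (c-1)) := by omega
          have h2 := ih c (by omega) -- D(c-1) ≤ D c + 1
          simp only [if_neg h1]
          omega
        · obtain ⟨e, he'⟩ := Int.even_or_odd' c
          rcases he' with h | h
          · exact absurd ⟨e, h⟩ he
          · subst h
            rw [show (2*e+1-1) = 2*e by ring, D_two_mul, D_two_mul_add_one]
            have h1 : (2:ℤ) ∣ (2*e+1-1) := ⟨e, by ring⟩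
            have h1' : (2:ℤ) ∣ 2*e := ⟨e, rfl⟩
            simp only [if_pos h1']
            by_cases h2 : 2 ∣ e <;> simp [h2] <;> omega
    · subst hc
      rw [show (2*c+1-1) = 2*c by ring, D_two_mul, D_two_mul_add_one]
      by_cases he : 2 ∣ c <;> simp [he] <;> omega

lemma D_add_pow : ∀ (y : ℕ) (a e : ℤ), (e = 1 ∨ e = -1) → D (a + e * 2^y) ≤ D a + 1 := by
  intro y
  induction y with
  | zero =>
    intro a e he
    rcases he with rfl | rfl
    · simpa using D_add_one a
    · rw [show a + (-1) * 2^0 = a - 1 by ring]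
      exact D_sub_one a
  | succ y ih =>
    intro a e he
    obtain ⟨m, hm | hm⟩ := Int.even_or_odd' a
    · subst hm
      rw [show 2*m + e*2^(y+1) = 2*(m + e*2^y) by ring, D_two_mul, D_two_mul]
      exact ih m e he
    · subst hm
      rw [show 2*m+1 + e*2^(y+1) = 2*(m + e*2^y)+1 by ring, D_two_mul_add_one,
        D_two_mul_add_one]
      rcases Nat.eq_zero_or_pos y with hy | hy
      · subst hy
        rw [show e * 2^0 = e by ring] at *
        by_cases hm2 : 2 ∣ m
        · have hodd : ¬ (2 ∣ (m + e)) := by rcases he with rfl | rfl <;> omega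
          rw [if_neg hodd, if_pos hm2]
          have : D (m + e) ≤ D m + 1 := by
            rcases he with rfl | rfl
            · exact D_add_one m
            · rw [show m + -1 = m - 1 by ring]; exact D_sub_one m
          omega
        · have heven : (2 ∣ (m + e)) := by rcases he with rfl | rfl <;> omega
          rw [if_pos heven, if_neg hm2]
          have : D (m + e) ≤ D m := by
            rcases he with rfl | rfl
            · exact D_add_one_of_odd m hm2
            · rw [show m + -1 = m - 1 by ring]; exact D_sub_one_of_odd m hm2
          omega
      · have h2 : (2:ℤ) ∣ e * 2^y := Dvd.dvd.mul_left (dvd_pow_self 2 (by omega)) e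
        obtain ⟨w, hw⟩ := h2
        rw [hw]
        have hpar : (2 ∣ (m + 2*w)) ↔ (2 ∣ m) := by omega
        rw [if_congr hpar rfl rfl]
        have := ih m e he
        rw [hw] at this
        by_cases hm2 : 2 ∣ m <;> simp only [if_pos, if_neg, hm2] <;> simp [hm2] <;> omega

lemma D_sum (t : ℕ) (x y : Fin t → ℕ) :
    D (∑ i, (-1) ^ (x i) * 2 ^ (y i)) ≤ t := by
  induction t with
  | zero => simp [D_zero]
  | succ t ih =>
    rw [Fin.sum_univ_succ, add_comm]
    have he : ((-1:ℤ)) ^ (x 0) = 1 ∨ ((-1:ℤ)) ^ (x 0) = -1 := by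
      rcases Nat.even_or_odd (x 0) with h | h
      · exact Or.inl h.neg_one_pow
      · exact Or.inr h.neg_one_pow
    calc D (_ + (-1) ^ (x 0) * 2 ^ (y 0)) ≤ D (∑ i : Fin t, (-1) ^ (x i.succ) * 2 ^ (y i.succ)) + 1 :=
          D_add_pow (y 0) _ _ he
      _ ≤ t + 1 := by have := ih (fun i => x i.succ) (fun i => y i.succ); omega

lemma testBit_false_of_ge {n i : ℕ} (h : n + 1 ≤ i) : n.testBit i = false := by
  apply Nat.testBit_eq_false_of_lt
  calc n < 2 ^ n := Nat.lt_two_pow_self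
    _ ≤ 2 ^ i := Nat.pow_le_pow_right (by norm_num) (by omega)

lemma bc_sum (n M : ℕ) (h : n + 1 ≤ M) :
    ∑ i ∈ Finset.range M, (if n.testBit i ∧ ¬n.testBit (i+1) then 1 else 0) = blockCount n := by
  rw [blockCount, Finset.card_filter]
  refine (Finset.sum_subset (Finset.range_subset_range.mpr h) ?_).symm
  intro i _ hni
  have : n.testBit i = false := testBit_false_of_ge (by simp [Finset.mem_range] at hni; omega)
  simp [this]

lemma bc_even (n : ℕ) : blockCount (2*n) = blockCount n := by
  rcases Nat.eq_zero_or_pos n with rfl | hn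
  · norm_num
  · rw [blockCount, Finset.card_filter, Finset.sum_range_succ']
    have hs : ∀ i : ℕ, ((2*n).testBit (i+1) ∧ ¬(2*n).testBit (i+1+1)) ↔
        (n.testBit i ∧ ¬ n.testBit (i+1)) := by
      intro i
      rw [Nat.testBit_succ, Nat.testBit_succ, show 2*n/2 = n by omega]
    have h0 : (2*n).testBit 0 = false := by
      rw [Nat.testBit_zero]
      simp only [decide_eq_false_iff_not]
      omega
    simp only [hs, h0, false_and, if_false, Bool.false_eq_true, add_zero]
    exact bc_sum n (2*n) (by omega)

lemma bc_odd (n : ℕ) : blockCount (2*n+1) = blockCount n + (if n % 2 = 0 then 1 else 0) := by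
  rw [blockCount, Finset.card_filter, show 2*n+1+1 = (2*n+1)+1 by ring, Finset.sum_range_succ']
  have hs : ∀ i : ℕ, ((2*n+1).testBit (i+1) ∧ ¬(2*n+1).testBit (i+1+1)) ↔
      (n.testBit i ∧ ¬ n.testBit (i+1)) := by
    intro i
    rw [Nat.testBit_succ, Nat.testBit_succ, show (2*n+1)/2 = n by omega]
  have h0 : (2*n+1).testBit 0 = true := by
    rw [Nat.testBit_zero]
    simp only [decide_eq_true_eq]
    omega
  have h1 : (2*n+1).testBit 1 = n.testBit 0 := by
    rw [show (1:ℕ) = 0 + 1 by rfl, Nat.testBit_succ, show (2*n+1)/2 = n by omega]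
  have h2 : n.testBit 0 = decide (n % 2 = 1) := Nat.testBit_zero n
  simp only [hs, h0, h1, h2, true_and]
  rw [bc_sum n (2*n+1) (by omega)]
  by_cases hp : n % 2 = 0
  · rw [if_pos hp]
    have : ¬ (n % 2 = 1) := by omega
    simp [this]
  · rw [if_neg hp]
    have : n % 2 = 1 := by omega
    simp [this]

lemma bc_eq_Ddown : ∀ n : ℕ, blockCount n = Ddown n := by
  intro n
  induction n using Nat.strong_induction_on with
  | _ n ih =>
    rcases Nat.eq_zero_or_pos n with rfl | hn
    · rw [show Ddown 0 = 0 from by simp [Ddown]]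
      simp [blockCount]
    · rcases (by omega : n = 2*(n/2) ∨ n = 2*(n/2)+1) with h | h
      · rw [h, bc_even, Ddown_two_mul, ih (n/2) (by omega)]
      · rw [h, bc_odd, Ddown_odd, ih (n/2) (by omega)]
        omega

/-- A positive number expressible as a signed sum of `t` powers of two has
block count at most `t`. -/
theorem blockCount_le_of_signed_sum (t : ℕ) (x y : Fin t → ℕ) (k : ℤ)
    (hk : k = ∑ i, (-1) ^ (x i) * 2 ^ (y i)) (h1 : 1 ≤ k) :
    blockCount k.toNat ≤ t := by
  have hk0 : ((k.toNat : ℕ) : ℤ) = k := Int.toNat_of_nonneg (by omega)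
  have h2 : blockCount k.toNat = D k := by
    rw [bc_eq_Ddown, ← D_ofNat, hk0]
  rw [h2, hk]
  exact D_sum t x y
end

section
/- If m ≥ 1 is a natural number and s = (−1)^x · 2^y is a signed power of two with m + s ≥ 1, then bl(m + s) ≤ bl(m) + 1, where bl denotes the number of maximal blocks of consecutive 1s in binary representation. -/
lemma bc_eq_sum (k N : ℕ) (hN : k + 1 ≤ N) :
    blockCount k = ((Finset.range N).filter fun i => k.testBit i ∧ ¬k.testBit (i + 1)).card := by
  unfold blockCount
  congr 1
  apply Finset.ext
  intro i
  simp only [Finset.mem_filter, Finset.mem_range]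
  constructor
  · rintro ⟨h1, h2⟩; exact ⟨by omega, h2⟩
  · rintro ⟨h1, h2, h3⟩
    refine ⟨?_, h2, h3⟩
    by_contra h
    have : k < 2 ^ i := lt_of_lt_of_le (Nat.lt_two_pow_self (n := k)) (Nat.pow_le_pow_right (by norm_num) (by omega))
    rw [Nat.testBit_lt_two_pow this] at h2
    simp at h2

lemma bc_rec (k : ℕ) :
    blockCount k = blockCount (k / 2) +
      (if k % 2 = 1 ∧ (k / 2) % 2 = 0 then 1 else 0) := by
  rw [bc_eq_sum k (k + 2) (by omega), bc_eq_sum (k / 2) (k + 1) (by omega)]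
  rw [Finset.card_filter, Finset.card_filter]
  rw [Finset.sum_range_succ']
  congr 1
  · apply Finset.sum_congr rfl
    intro i _
    congr 1
    simp [Nat.testBit_succ]
  · have e1 : k.testBit 0 = decide (k % 2 = 1) := Nat.testBit_zero k
    have e2 : k.testBit (0 + 1) = decide ((k / 2) % 2 = 1) := by
      rw [Nat.testBit_succ]; exact Nat.testBit_zero _
    have hcond : ((k.testBit 0 = true) ∧ ¬(k.testBit (0 + 1) = true)) ↔
        (k % 2 = 1 ∧ (k / 2) % 2 = 0) := by
      rw [e1, e2]; simp only [decide_eq_true_eq]; omega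
    exact if_congr hcond rfl rfl

lemma bc_even_s8 {k : ℕ} (h : k % 2 = 0) : blockCount k = blockCount (k / 2) := by
  rw [bc_rec k, if_neg (by omega)]; omega

lemma bc_oe {k : ℕ} (h : k % 2 = 1) (h2 : (k / 2) % 2 = 0) :
    blockCount k = blockCount (k / 2) + 1 := by
  rw [bc_rec k, if_pos ⟨h, h2⟩]

lemma bc_oo {k : ℕ} (h : k % 2 = 1) (h2 : (k / 2) % 2 = 1) :
    blockCount k = blockCount (k / 2) := by
  rw [bc_rec k, if_neg (by omega)]; omega

lemma bc_P0' (c : ℕ) (hc : c % 2 = 0) : blockCount (c + 1) ≤ blockCount c + 1 := by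
  have h1 : (c + 1) % 2 = 1 := by omega
  have h2 : (c + 1) / 2 = c / 2 := by omega
  have hc' : blockCount c = blockCount (c / 2) := bc_even_s8 hc
  rcases Nat.even_or_odd (c / 2) with h | h
  · rw [bc_oe h1 (h2 ▸ Nat.even_iff.mp h), h2]; omega
  · rw [bc_oo h1 (h2 ▸ Nat.odd_iff.mp h), h2]; omega

lemma bc_L {b : ℕ} (hb : b % 2 = 1) : blockCount (b + 1) ≤ blockCount b := by
  induction b using Nat.strong_induction_on with
  | _ b ih =>
    have hb2 : (b + 1) % 2 = 0 := by omega
    have hdiv : (b + 1) / 2 = b / 2 + 1 := by omega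
    rw [bc_even_s8 hb2, hdiv]
    rcases Nat.even_or_odd (b / 2) with hc | hc
    · have hc' : (b / 2) % 2 = 0 := Nat.even_iff.mp hc
      rw [bc_oe hb hc']
      exact bc_P0' (b / 2) hc'
    · have hc' : (b / 2) % 2 = 1 := Nat.odd_iff.mp hc
      rw [bc_oo hb hc']
      exact ih (b / 2) (by omega) hc'

lemma bc_L2 {b : ℕ} (hb : b % 2 = 0) : blockCount b ≤ blockCount (b + 1) := by
  have h1 : (b + 1) % 2 = 1 := by omega
  have h2 : (b + 1) / 2 = b / 2 := by omega
  rw [bc_even_s8 hb]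
  rcases Nat.even_or_odd (b / 2) with h | h
  · rw [bc_oe h1 (h2 ▸ Nat.even_iff.mp h), h2]; omega
  · rw [bc_oo h1 (h2 ▸ Nat.odd_iff.mp h), h2]

lemma bc_P0 (a : ℕ) : blockCount (a + 1) ≤ blockCount a + 1 := by
  rcases Nat.even_or_odd a with h | h
  · exact bc_P0' a (Nat.even_iff.mp h)
  · exact le_trans (bc_L (Nat.odd_iff.mp h)) (by omega)

lemma bc_Q0 (a : ℕ) : blockCount a ≤ blockCount (a + 1) + 1 := by
  induction a using Nat.strong_induction_on with
  | _ a ih =>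
    rcases Nat.even_or_odd a with h | h
    · exact le_trans (bc_L2 (Nat.even_iff.mp h)) (by omega)
    · have ha : a % 2 = 1 := Nat.odd_iff.mp h
      have h2 : (a + 1) % 2 = 0 := by omega
      have h3 : (a + 1) / 2 = a / 2 + 1 := by omega
      rw [bc_even_s8 h2, h3]
      rcases Nat.even_or_odd (a / 2) with hc | hc
      · have hc' : (a / 2) % 2 = 0 := Nat.even_iff.mp hc
        rw [bc_oe ha hc']
        have := bc_L2 hc'
        omega
      · have hc' : (a / 2) % 2 = 1 := Nat.odd_iff.mp hc
        rw [bc_oo ha hc']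
        exact ih (a / 2) (by omega)

lemma bc_main : ∀ y a : ℕ, blockCount (a + 2 ^ y) ≤ blockCount a + 1 ∧
    blockCount a ≤ blockCount (a + 2 ^ y) + 1 := by
  intro y
  induction y with
  | zero => intro a; exact ⟨bc_P0 a, bc_Q0 a⟩
  | succ y ih =>
    intro a
    match y, ih with
    | 0, _ =>
      have hd : (a + 2) / 2 = a / 2 + 1 := by omega
      have hm : (a + 2) % 2 = a % 2 := by omega
      rw [show a + 2 ^ 1 = a + 2 by norm_num]
      rcases Nat.even_or_odd a with h | h
      · have ha : a % 2 = 0 := Nat.even_iff.mp h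
        rw [bc_even_s8 ha, bc_even_s8 (by omega : (a + 2) % 2 = 0), hd]
        exact ⟨bc_P0 (a / 2), bc_Q0 (a / 2)⟩
      · have ha : a % 2 = 1 := Nat.odd_iff.mp h
        have ha2 : (a + 2) % 2 = 1 := by omega
        rcases Nat.even_or_odd (a / 2) with hc | hc
        · have hc' : (a / 2) % 2 = 0 := Nat.even_iff.mp hc
          have h1 : (a / 2 + 1) % 2 = 1 := by omega
          rw [bc_oe ha hc', bc_oo ha2 (hd ▸ h1 : (a + 2) / 2 % 2 = 1), hd]
          exact ⟨le_trans (bc_P0 (a / 2)) (by omega), by have := bc_L2 hc'; omega⟩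
        · have hc' : (a / 2) % 2 = 1 := Nat.odd_iff.mp hc
          have h1 : (a / 2 + 1) % 2 = 0 := by omega
          rw [bc_oo ha hc', bc_oe ha2 (hd ▸ h1 : (a + 2) / 2 % 2 = 0), hd]
          exact ⟨by have := bc_L hc'; omega, by have := bc_Q0 (a / 2); omega⟩
    | y' + 1, ih =>
      have hd : (a + 2 ^ (y' + 2)) / 2 = a / 2 + 2 ^ (y' + 1) := by
        rw [pow_succ]; omega
      have hm : (a + 2 ^ (y' + 2)) % 2 = a % 2 := by
        have : 2 ^ (y' + 2) % 2 = 0 := by rw [pow_succ]; omega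
        omega
      have hp : (a / 2 + 2 ^ (y' + 1)) % 2 = (a / 2) % 2 := by
        have : 2 ^ (y' + 1) % 2 = 0 := by rw [pow_succ]; omega
        omega
      have key := ih (a / 2)
      rw [bc_rec (a + 2 ^ (y' + 2)), bc_rec a, hd, hm, hp]
      constructor <;> omega

/-- Adding a signed power of two changes the block count by at most one. -/
theorem blockCount_add_signed_pow_two (m : ℕ) (hm : 1 ≤ m) (x y : ℕ)
    (h1 : 1 ≤ (m : ℤ) + (-1) ^ x * 2 ^ y) :
    blockCount ((m : ℤ) + (-1) ^ x * 2 ^ y).toNat ≤ blockCount m + 1 := by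
  rcases Nat.even_or_odd x with hx | hx
  · have hpow : ((-1 : ℤ)) ^ x = 1 := hx.neg_one_pow
    have heq : ((m : ℤ) + (-1) ^ x * 2 ^ y) = ((m + 2 ^ y : ℕ) : ℤ) := by
      rw [hpow]; push_cast; ring
    rw [heq, Int.toNat_natCast]
    exact (bc_main y m).1
  · have hpow : ((-1 : ℤ)) ^ x = -1 := hx.neg_one_pow
    have hle : 2 ^ y ≤ m := by
      rw [hpow] at h1
      have : (2 : ℤ) ^ y ≤ (m : ℤ) := by linarith
      exact_mod_cast this
    have heq : ((m : ℤ) + (-1) ^ x * 2 ^ y) = ((m - 2 ^ y : ℕ) : ℤ) := by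
      rw [hpow, Nat.cast_sub hle]; push_cast; ring
    rw [heq, Int.toNat_natCast]
    have := (bc_main y (m - 2 ^ y)).2
    rwa [Nat.sub_add_cancel hle] at this
end

section
/- Lower bound: for every natural number k ≥ 1, log₂(bl(k) + 1) ≤ β(k), i.e., bl(k) ≤ 2^{β(k)} − 1, where β(k) is the minimum number of terms of a DNF formula with exactly k satisfying assignments and bl(k) is the binary block count of k. -/
/-- An assignment satisfies a term (a conjunction of literals, each literal being
a variable together with the required Boolean value) iff it agrees on every literal. -/
def SatisfiesTerm {n : ℕ} (σ : Fin n → Bool) (T : List (Fin n × Bool)) : Prop :=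
  ∀ l ∈ T, σ l.1 = l.2

/-- The number of satisfying assignments of a DNF formula, given as a list of terms. -/
noncomputable def solCount {n : ℕ} (F : List (List (Fin n × Bool))) : ℕ :=
  Nat.card {σ : Fin n → Bool // ∃ T ∈ F, SatisfiesTerm σ T}

/-- `beta k` is the minimum number of terms of a DNF formula (over any finite
number of variables) with exactly `k` satisfying assignments. -/
noncomputable def beta (k : ℕ) : ℕ :=
  sInf {m | ∃ n : ℕ, ∃ F : List (List (Fin n × Bool)), F.length = m ∧ solCount F = k}

/-! ### Auxiliary development: a recursive block counter -/

/-- recursive block counter; `c` records whether the previous (lower) bit was a 1. -/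
def fbl (a : ℕ) (c : Bool) : ℕ :=
  if h : a = 0 then 0
  else if a % 2 = 1 then fbl (a / 2) true + (if c then 0 else 1)
  else fbl (a / 2) false
decreasing_by all_goals exact Nat.div_lt_self (Nat.pos_of_ne_zero h) one_lt_two

lemma fbl_zero (c : Bool) : fbl 0 c = 0 := by rw [fbl]; simp

lemma fbl_even (b : ℕ) (c : Bool) : fbl (2 * b) c = fbl b false := by
  rcases Nat.eq_zero_or_pos b with rfl | hb
  · simp [fbl_zero]
  · rw [fbl]
    have : 2 * b ≠ 0 := by omega
    simp [this, Nat.mul_div_cancel_left, Nat.mul_mod_right]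

lemma fbl_odd (b : ℕ) (c : Bool) :
    fbl (2 * b + 1) c = fbl b true + (if c then 0 else 1) := by
  rw [fbl]
  have h1 : (2 * b + 1) % 2 = 1 := by omega
  have h2 : (2 * b + 1) / 2 = b := by omega
  simp [h1, h2]

lemma fbl_i (a : ℕ) : fbl a true ≤ fbl a false ∧ fbl a false ≤ fbl a true + 1 := by
  induction a using Nat.strong_induction_on with
  | _ a ih =>
    rcases Nat.even_or_odd a with ⟨b, hb⟩ | ⟨b, hb⟩
    · subst hb
      rw [show b + b = 2 * b by ring, fbl_even, fbl_even]
      omega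
    · subst hb
      rw [fbl_odd, fbl_odd]
      simp

lemma fbl_ii (a : ℕ) : fbl a true ≤ fbl (a + 1) false ∧ fbl (a + 1) false ≤ fbl a true + 1 := by
  induction a using Nat.strong_induction_on with
  | _ a ih =>
    rcases Nat.even_or_odd a with ⟨b, hb⟩ | ⟨b, hb⟩
    · subst hb
      rw [show b + b = 2 * b by ring, show 2 * b + 1 = 2 * b + 1 from rfl, fbl_even, fbl_odd]
      have := fbl_i b
      simp; omega
    · subst hb
      rw [show 2 * b + 1 + 1 = 2 * (b + 1) by ring, fbl_even, fbl_odd]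
      have := ih b (by omega)
      simp; omega

lemma fbl_G0 (a : ℕ) (c : Bool) :
    fbl (a + 1) c ≤ fbl a c + 1 ∧ fbl a c ≤ fbl (a + 1) c + 1 := by
  rcases Nat.even_or_odd a with ⟨b, hb⟩ | ⟨b, hb⟩
  · subst hb
    rw [show b + b = 2 * b by ring, show 2 * b + 1 = 2 * b + 1 from rfl, fbl_even, fbl_odd]
    have := fbl_i b
    cases c <;> simp <;> omega
  · subst hb
    rw [show 2 * b + 1 + 1 = 2 * (b + 1) by ring, fbl_even, fbl_odd]
    have := fbl_ii b
    cases c <;> simp <;> omega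

lemma fbl_G (e : ℕ) : ∀ (a : ℕ) (c : Bool),
    fbl (a + 2 ^ e) c ≤ fbl a c + 1 ∧ fbl a c ≤ fbl (a + 2 ^ e) c + 1 := by
  induction e with
  | zero => intro a c; simpa using fbl_G0 a c
  | succ e ih =>
    intro a c
    rcases Nat.even_or_odd a with ⟨b, hb⟩ | ⟨b, hb⟩
    · subst hb
      rw [show b + b + 2 ^ (e + 1) = 2 * (b + 2 ^ e) by ring, show b + b = 2 * b by ring,
        fbl_even, fbl_even]
      exact ih b false
    · subst hb
      rw [show 2 * b + 1 + 2 ^ (e + 1) = 2 * (b + 2 ^ e) + 1 by ring, fbl_odd, fbl_odd]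
      have := ih b true
      omega

/-! ### Relating `blockCount` to `fbl` -/

lemma card_filter_range_succ (p : ℕ → Prop) [DecidablePred p] (M : ℕ) :
    ((Finset.range (M + 1)).filter p).card
      = ((Finset.range M).filter p).card + (if p M then 1 else 0) := by
  rw [Finset.range_add_one, Finset.filter_insert]
  split
  · rw [Finset.card_insert_of_notMem (by simp)]
  · simp

lemma filter_range_succ_card (p q : ℕ → Prop) [DecidablePred p] [DecidablePred q]
    (h : ∀ i, p (i + 1) ↔ q i) :
    ∀ M, ((Finset.range (M + 1)).filter p).card
      = ((Finset.range M).filter q).card + (if p 0 then 1 else 0) := by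
  intro M
  induction M with
  | zero =>
    simp [Finset.range_one, Finset.filter_singleton]
    split <;> simp
  | succ M ih =>
    rw [card_filter_range_succ p (M + 1), card_filter_range_succ q M, ih]
    have : (if p (M + 1) then 1 else 0) = (if q M then 1 else 0) := by
      simp only [h]
    omega

lemma blockCount_eq_large (k : ℕ) : ∀ M, k ≤ M →
    ((Finset.range (M + 1)).filter fun i => k.testBit i ∧ ¬k.testBit (i + 1)).card
      = ((Finset.range (k + 1)).filter fun i => k.testBit i ∧ ¬k.testBit (i + 1)).card := by
  intro M
  induction M with
  | zero => intro h; interval_cases k; rfl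
  | succ M ih =>
    intro hM
    rcases Nat.lt_or_ge k (M + 1) with h | h
    · rw [card_filter_range_succ, ih (by omega)]
      have : ¬ (k.testBit (M + 1) ∧ ¬k.testBit (M + 1 + 1)) := by
        rintro ⟨hb, -⟩
        have := Nat.ge_two_pow_of_testBit hb
        have := Nat.lt_two_pow_self (n := M + 1)
        omega
      rw [if_neg this, add_zero]
    · have : k = M + 1 := by omega
      subst this; rfl

lemma testBit_two_mul_succ (b i : ℕ) : (2 * b).testBit (i + 1) = b.testBit i := by
  rw [Nat.testBit_succ, Nat.mul_div_cancel_left _ (by norm_num)]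

lemma testBit_two_mul_add_one_succ (b i : ℕ) : (2 * b + 1).testBit (i + 1) = b.testBit i := by
  rw [Nat.testBit_succ]
  congr 1
  omega

lemma blockCount_two_mul (b : ℕ) : blockCount (2 * b) = blockCount b := by
  rcases Nat.eq_zero_or_pos b with rfl | hb
  · rfl
  · unfold blockCount
    rw [filter_range_succ_card _ (fun i => b.testBit i ∧ ¬b.testBit (i + 1))
        (by intro i; rw [testBit_two_mul_succ, testBit_two_mul_succ]) (2 * b)]
    have h0 : ¬ ((2 * b).testBit 0 ∧ ¬(2 * b).testBit 1) := by
      rw [Nat.testBit_zero]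
      simp
    rw [if_neg h0, add_zero,
      show 2 * b = (2 * b - 1) + 1 by omega,
      blockCount_eq_large b (2 * b - 1) (by omega)]

lemma blockCount_two_mul_add_one (b : ℕ) :
    blockCount (2 * b + 1) = blockCount b + (if b % 2 = 0 then 1 else 0) := by
  unfold blockCount
  rw [filter_range_succ_card _ (fun i => b.testBit i ∧ ¬b.testBit (i + 1))
      (by intro i; rw [testBit_two_mul_add_one_succ, testBit_two_mul_add_one_succ]) (2 * b + 1),
    show 2 * b + 1 = (2 * b) + 1 from rfl,
    blockCount_eq_large b (2 * b) (by omega)]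
  congr 1
  have h0 : (2 * b + 1).testBit 0 = true := by rw [Nat.testBit_zero]; simp
  have h1 : (2 * b + 1).testBit 1 = b.testBit 0 := testBit_two_mul_add_one_succ b 0
  rw [h0, h1, Nat.testBit_zero]
  rcases Nat.mod_two_eq_zero_or_one b with hb | hb <;> simp [hb]

lemma fbl_state (b : ℕ) : fbl b false = fbl b true + (if b % 2 = 1 then 1 else 0) := by
  rcases Nat.eq_zero_or_pos b with rfl | hb
  · simp [fbl_zero]
  rcases Nat.even_or_odd b with ⟨c, hc⟩ | ⟨c, hc⟩
  · rw [show b = 2 * c by omega, fbl_even, fbl_even]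
    simp [Nat.mul_mod_right]
  · rw [show b = 2 * c + 1 by omega, fbl_odd, fbl_odd]
    have : (2 * c + 1) % 2 = 1 := by omega
    simp [this]

lemma blockCount_eq_fbl (k : ℕ) : blockCount k = fbl k false := by
  induction k using Nat.strong_induction_on with
  | _ k ih =>
    rcases Nat.eq_zero_or_pos k with rfl | hk
    · simp [fbl_zero]; rfl
    rcases Nat.even_or_odd k with ⟨b, hb⟩ | ⟨b, hb⟩
    · rw [show k = 2 * b by omega, blockCount_two_mul, fbl_even, ih b (by omega)]
    · rw [show k = 2 * b + 1 by omega, blockCount_two_mul_add_one, fbl_odd,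
        ih b (by omega), fbl_state b]
      rcases Nat.mod_two_eq_zero_or_one b with h | h <;> simp [h]

lemma blockCount_add_pow (a e : ℕ) : blockCount (a + 2 ^ e) ≤ blockCount a + 1 := by
  rw [blockCount_eq_fbl, blockCount_eq_fbl]; exact (fbl_G e a false).1

lemma blockCount_sub_pow (a e : ℕ) : blockCount a ≤ blockCount (a + 2 ^ e) + 1 := by
  rw [blockCount_eq_fbl, blockCount_eq_fbl]; exact (fbl_G e a false).2

lemma blockCount_zero : blockCount 0 = 0 := by rfl

/-- the signed-powers bound: if `z` is a signed sum of powers of two, its block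
count is at most the number of summands. -/
lemma rep_bound : ∀ (ln lp : List ℕ) (z : ℕ),
    (z : ℤ) = ((lp.map fun e => (2:ℤ) ^ e).sum - (ln.map fun e => (2:ℤ) ^ e).sum) →
    blockCount z ≤ lp.length + ln.length := by
  intro ln
  induction ln with
  | nil =>
    intro lp
    induction lp with
    | nil => intro z hz; simp at hz; simp [hz, blockCount_zero]
    | cons e lp ih =>
      intro z hz
      simp only [List.map_cons, List.sum_cons, List.map_nil, List.sum_nil, sub_zero] at hz ih
      have hz2 : 2 ^ e ≤ z := by
        have h1 : (0:ℤ) ≤ (lp.map fun e => (2:ℤ) ^ e).sum := by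
          apply List.sum_nonneg; intro x hx
          simp only [List.mem_map] at hx
          obtain ⟨a, -, rfl⟩ := hx; positivity
        have h2 : ((2:ℤ))^e ≤ (z:ℤ) := by linarith
        exact_mod_cast h2
      have hz' : ((z - 2 ^ e : ℕ) : ℤ) = (lp.map fun e => (2:ℤ) ^ e).sum := by
        push_cast [hz2]
        linarith
      have := ih (z - 2 ^ e) (by simpa using hz')
      calc blockCount z = blockCount ((z - 2 ^ e) + 2 ^ e) := by rw [Nat.sub_add_cancel hz2]
        _ ≤ blockCount (z - 2 ^ e) + 1 := blockCount_add_pow _ _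
        _ ≤ lp.length + 1 := by simp at this; omega
        _ = (e :: lp).length + [].length := by simp
  | cons e ln ih =>
    intro lp z hz
    simp only [List.map_cons, List.sum_cons] at hz
    have h1 : ((z + 2 ^ e : ℕ) : ℤ)
        = ((lp.map fun e => (2:ℤ) ^ e).sum - (ln.map fun e => (2:ℤ) ^ e).sum) := by
      push_cast
      linarith [hz]
    have := ih lp (z + 2 ^ e) h1
    have h2 := blockCount_sub_pow z e
    simp only [List.length_cons]
    omega

/-! ### The DNF counting side -/

lemma term_card {n : ℕ} (T : List (Fin n × Bool)) :
    Nat.card {σ : Fin n → Bool // SatisfiesTerm σ T} = 0 ∨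
    ∃ e, Nat.card {σ : Fin n → Bool // SatisfiesTerm σ T} = 2 ^ e := by
  by_cases hc : ∃ x : Fin n, (x, true) ∈ T ∧ (x, false) ∈ T
  · left
    obtain ⟨x, h1, h2⟩ := hc
    have : IsEmpty {σ : Fin n → Bool // SatisfiesTerm σ T} := by
      constructor; rintro ⟨σ, hσ⟩
      have e1 := hσ _ h1
      have e2 := hσ _ h2
      simp at e1 e2
      rw [e1] at e2; exact Bool.true_eq_false.mp e2
    exact Nat.card_of_isEmpty
  · push_neg at hc
    right
    classical
    set V : Finset (Fin n) := (T.map Prod.fst).toFinset with hV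
    set g : Fin n → Bool := fun x => decide ((x, true) ∈ T) with hg
    have key : ∀ σ : Fin n → Bool, SatisfiesTerm σ T ↔ ∀ x ∈ V, σ x = g x := by
      intro σ
      constructor
      · intro hσ x hx
        rw [hV, List.mem_toFinset, List.mem_map] at hx
        obtain ⟨⟨x', b⟩, hmem, hx'⟩ := hx
        simp at hx'; subst hx'
        have := hσ _ hmem
        simp at this
        cases b with
        | true => simp [hg, this, hmem]
        | false =>
          have hnt : (x', true) ∉ T := fun h => hc x' h hmem
          simp [hg, hnt, this]
      · intro h l hl
        obtain ⟨x, b⟩ := l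
        have hxV : x ∈ V := by
          rw [hV, List.mem_toFinset, List.mem_map]
          exact ⟨(x, b), hl, rfl⟩
        have := h x hxV
        cases b with
        | true => simp [hg, hl] at this ⊢; exact this
        | false =>
          have ht : (x, true) ∉ T := fun h' => hc x h' hl
          simp [hg, ht] at this ⊢; exact this
    have E : {σ : Fin n → Bool // SatisfiesTerm σ T} ≃ ({x : Fin n // x ∉ V} → Bool) :=
      { toFun := fun σ x => σ.1 x.1
        invFun := fun h => ⟨fun x => if hx : x ∈ V then g x else h ⟨x, hx⟩, by
          rw [key]; intro x hx; simp [hx]⟩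
        left_inv := by
          rintro ⟨σ, hσ⟩
          ext x
          by_cases hx : x ∈ V
          · simp [hx, ((key σ).mp hσ x hx).symm]
          · simp [hx]
        right_inv := by
          intro h
          ext x
          simp [x.2] }
    refine ⟨Nat.card {x : Fin n // x ∉ V}, ?_⟩
    rw [Nat.card_congr E, Nat.card_fun, Nat.card_eq_fintype_card (α := Bool)]
    simp

lemma sat_append {n : ℕ} (σ : Fin n → Bool) (T U : List (Fin n × Bool)) :
    SatisfiesTerm σ (T ++ U) ↔ SatisfiesTerm σ T ∧ SatisfiesTerm σ U := by
  simp only [SatisfiesTerm, List.forall_mem_append]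

lemma solCount_cons {n : ℕ} (T₀ : List (Fin n × Bool)) (F' : List (List (Fin n × Bool))) :
    solCount (T₀ :: F') + solCount (F'.map fun U => T₀ ++ U)
      = solCount F' + Nat.card {σ : Fin n → Bool // SatisfiesTerm σ T₀} := by
  classical
  set A : Set (Fin n → Bool) := {σ | ∃ U ∈ F', SatisfiesTerm σ U} with hA'
  set B : Set (Fin n → Bool) := {σ | SatisfiesTerm σ T₀} with hB'
  have hA : solCount F' = A.ncard := by
    rw [solCount, ← Nat.card_coe_set_eq]
    exact Nat.card_congr (Equiv.subtypeEquivRight fun σ => Iff.rfl)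
  have hB : Nat.card {σ : Fin n → Bool // SatisfiesTerm σ T₀} = B.ncard := by
    rw [← Nat.card_coe_set_eq]
    exact Nat.card_congr (Equiv.subtypeEquivRight fun σ => Iff.rfl)
  have hUnion : solCount (T₀ :: F') = (B ∪ A).ncard := by
    rw [solCount, ← Nat.card_coe_set_eq]
    refine Nat.card_congr (Equiv.subtypeEquivRight fun σ => ?_)
    simp only [hA', hB', Set.mem_union, Set.mem_setOf_eq, List.mem_cons]
    constructor
    · rintro ⟨T, (rfl | hT), hs⟩
      · exact Or.inl hs
      · exact Or.inr ⟨T, hT, hs⟩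
    · rintro (hs | ⟨T, hT, hs⟩)
      · exact ⟨T₀, Or.inl rfl, hs⟩
      · exact ⟨T, Or.inr hT, hs⟩
  have hInter : solCount (F'.map fun U => T₀ ++ U) = (B ∩ A).ncard := by
    rw [solCount, ← Nat.card_coe_set_eq]
    refine Nat.card_congr (Equiv.subtypeEquivRight fun σ => ?_)
    simp only [hA', hB', Set.mem_inter_iff, Set.mem_setOf_eq, List.mem_map]
    constructor
    · rintro ⟨T, ⟨U, hU, rfl⟩, hs⟩
      rw [sat_append] at hs
      exact ⟨hs.1, U, hU, hs.2⟩
    · rintro ⟨h0, U, hU, hs⟩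
      exact ⟨T₀ ++ U, ⟨U, hU, rfl⟩, (sat_append σ T₀ U).mpr ⟨h0, hs⟩⟩
  rw [hUnion, hInter, hA, hB]
  have := Set.ncard_union_add_ncard_inter B A (Set.toFinite B) (Set.toFinite A)
  omega

lemma dnf_rep {n : ℕ} : ∀ (m : ℕ) (F : List (List (Fin n × Bool))), F.length = m →
    ∃ lp ln : List ℕ, lp.length + ln.length ≤ 2 ^ m - 1 ∧
      (solCount F : ℤ) = (lp.map fun e => (2:ℤ) ^ e).sum - (ln.map fun e => (2:ℤ) ^ e).sum := by
  intro m
  induction m with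
  | zero =>
    intro F hF
    rw [List.length_eq_zero_iff] at hF
    subst hF
    refine ⟨[], [], by simp, ?_⟩
    have : IsEmpty {σ : Fin n → Bool // ∃ T ∈ ([] : List (List (Fin n × Bool))), SatisfiesTerm σ T} := by
      constructor; rintro ⟨σ, T, hT, -⟩; exact List.not_mem_nil hT
    simp [solCount, Nat.card_of_isEmpty]
  | succ m ih =>
    intro F hF
    rcases F with _ | ⟨T₀, F'⟩
    · simp at hF
    have hF' : F'.length = m := by simpa using hF
    obtain ⟨lp1, ln1, hlen1, he1⟩ := ih F' hF'
    obtain ⟨lp2, ln2, hlen2, he2⟩ := ih (F'.map fun U => T₀ ++ U) (by simpa using hF')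
    have hkey := solCount_cons T₀ F'
    have hpow : 1 ≤ 2 ^ m := Nat.one_le_two_pow
    have hpow2 : 2 ^ (m + 1) = 2 ^ m + 2 ^ m := by ring
    rcases term_card T₀ with hB | ⟨e, hB⟩
    · refine ⟨lp1 ++ ln2, ln1 ++ lp2, ?_, ?_⟩
      · simp only [List.length_append]; omega
      · have : (solCount (T₀ :: F') : ℤ)
            = (solCount F' : ℤ) - (solCount (F'.map fun U => T₀ ++ U) : ℤ) := by
          rw [hB] at hkey
          omega
        rw [this, he1, he2]
        simp [List.sum_append]
        ring
    · refine ⟨e :: (lp1 ++ ln2), ln1 ++ lp2, ?_, ?_⟩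
      · simp only [List.length_cons, List.length_append]; omega
      · have : (solCount (T₀ :: F') : ℤ)
            = (solCount F' : ℤ) + 2 ^ e - (solCount (F'.map fun U => T₀ ++ U) : ℤ) := by
          rw [hB] at hkey
          push_cast at hkey
          linarith
        rw [this, he1, he2]
        simp [List.sum_append]
        ring

lemma exists_dnf (k : ℕ) :
    ∃ (n : ℕ) (F : List (List (Fin n × Bool))), F.length = k ∧ solCount F = k := by
  classical
  set δ : Fin k → (Fin k → Bool) := fun i j => decide (j = i) with hδ
  refine ⟨k, (List.finRange k).map (fun i => (List.finRange k).map fun j => (j, δ i j)), by simp, ?_⟩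
  have hinj : Function.Injective δ := by
    intro i i' h
    have := congrFun h i
    simp [hδ] at this
    exact this
  have key : ∀ σ : Fin k → Bool,
      (∃ T ∈ (List.finRange k).map (fun i => (List.finRange k).map fun j => (j, δ i j)),
        SatisfiesTerm σ T) ↔ ∃ i, δ i = σ := by
    intro σ
    constructor
    · rintro ⟨T, hT, hs⟩
      rw [List.mem_map] at hT
      obtain ⟨i, -, rfl⟩ := hT
      refine ⟨i, funext fun j => ?_⟩
      exact (hs (j, δ i j) (List.mem_map_of_mem (List.mem_finRange j))).symm
    · rintro ⟨i, rfl⟩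
      refine ⟨_, List.mem_map_of_mem (List.mem_finRange i), ?_⟩
      rintro ⟨j, b⟩ hl
      rw [List.mem_map] at hl
      obtain ⟨j', -, hj'⟩ := hl
      simp at hj'
      obtain ⟨rfl, rfl⟩ := hj'
      rfl
  rw [solCount]
  have e1 : {σ : Fin k → Bool // ∃ T ∈ (List.finRange k).map
        (fun i => (List.finRange k).map fun j => (j, δ i j)), SatisfiesTerm σ T}
      ≃ ↥(Set.range δ) :=
    Equiv.subtypeEquivRight fun σ => by rw [key σ]; exact Iff.rfl
  rw [Nat.card_congr e1, Nat.card_congr (Equiv.ofInjective δ hinj).symm,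
    Nat.card_eq_fintype_card, Fintype.card_fin]

/-- Lower bound: `log₂ (bl k + 1) ≤ β k`, i.e. `bl k ≤ 2 ^ β k - 1`. -/
theorem blockCount_lower_bound_beta (k : ℕ) (hk : 1 ≤ k) :
    Real.logb 2 (blockCount k + 1) ≤ beta k ∧ blockCount k ≤ 2 ^ beta k - 1 := by
  obtain ⟨n₀, F₀, hlen₀, hsol₀⟩ := exists_dnf k
  have hne : {m | ∃ n : ℕ, ∃ F : List (List (Fin n × Bool)),
      F.length = m ∧ solCount F = k}.Nonempty := ⟨k, n₀, F₀, hlen₀, hsol₀⟩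
  have hmem : beta k ∈ {m | ∃ n : ℕ, ∃ F : List (List (Fin n × Bool)),
      F.length = m ∧ solCount F = k} := Nat.sInf_mem hne
  obtain ⟨n, F, hlen, hsol⟩ := hmem
  obtain ⟨lp, ln, hl, he⟩ := dnf_rep F.length F rfl
  rw [hsol] at he
  have hbl : blockCount k ≤ lp.length + ln.length := rep_bound ln lp k he
  rw [hlen] at hl
  have hmain : blockCount k ≤ 2 ^ beta k - 1 := le_trans hbl hl
  refine ⟨?_, hmain⟩
  have hpow : 1 ≤ 2 ^ beta k := Nat.one_le_two_pow
  have h2 : (blockCount k + 1 : ℝ) ≤ (2:ℝ) ^ beta k := by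
    have : blockCount k + 1 ≤ 2 ^ beta k := by omega
    exact_mod_cast this
  calc Real.logb 2 (blockCount k + 1)
      ≤ Real.logb 2 ((2:ℝ) ^ beta k) := by
        rw [Real.logb_le_logb (by norm_num) (by positivity) (by positivity)]
        exact h2
    _ = beta k := by
        rw [Real.logb_pow, Real.logb_self_eq_one (by norm_num)]
        simp
end

section
/- For every natural number k ≥ 1, β(k) ≤ α(k), where β(k) is the minimum number of terms of a DNF with exactly k satisfying assignments and α(k) is the minimum size of a set family generating an ideal of exactly k elements. -/
lemma exists_ideal_card (k : ℕ) (hk : 1 ≤ k) :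
    ∃ 𝒮 : Finset (Finset ℕ), 𝒮.Nonempty ∧ (idealOf 𝒮).card = k := by
  induction k with
  | zero => omega
  | succ k ih =>
    rcases Nat.lt_or_ge k 1 with h | h
    · interval_cases k
      refine ⟨{∅}, ⟨∅, by simp⟩, ?_⟩
      simp [idealOf]
    · obtain ⟨𝒮, hne, hcard⟩ := ih h
      set x := (𝒮.sup fun S => S.sup id) + 1 with hx
      have hxnot : ({x} : Finset ℕ) ∉ idealOf 𝒮 := by
        rw [mem_idealOf]
        rintro ⟨S, hS, hsub⟩
        have hxS : x ∈ S := hsub (by simp)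
        have h1 : x ≤ S.sup id := Finset.le_sup (f := id) hxS
        have h2 : S.sup id ≤ 𝒮.sup fun S => S.sup id :=
          Finset.le_sup (f := fun S => S.sup id) hS
        omega
      have hempty : (∅ : Finset ℕ) ∈ idealOf 𝒮 := by
        obtain ⟨S, hS⟩ := hne
        exact mem_idealOf.mpr ⟨S, hS, Finset.empty_subset _⟩
      refine ⟨insert {x} 𝒮, ⟨{x}, Finset.mem_insert_self _ _⟩, ?_⟩
      have heq : idealOf (insert {x} 𝒮) = insert {x} (idealOf 𝒮) := by
        ext A
        simp only [mem_idealOf, Finset.mem_insert, Finset.subset_singleton_iff]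
        constructor
        · rintro ⟨S, hS | hS, hsub⟩
          · subst hS
            rcases Finset.subset_singleton_iff.mp hsub with h | h
            · exact Or.inr (h ▸ mem_idealOf.mp hempty)
            · exact Or.inl h
          · exact Or.inr ⟨S, hS, hsub⟩
        · rintro (h | h)
          · exact ⟨{x}, Or.inl rfl, h ▸ Finset.Subset.refl _⟩
          · obtain ⟨S, hS, hsub⟩ := h
            exact ⟨S, Or.inr hS, hsub⟩
      rw [heq, Finset.card_insert_of_notMem hxnot, hcard]

lemma family_dnf (𝒮 : Finset (Finset ℕ)) :
    ∃ n : ℕ, ∃ F : List (List (Fin n × Bool)),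
      F.length = 𝒮.card ∧ solCount F = (idealOf 𝒮).card := by
  classical
  set n := (𝒮.sup fun S => S.sup id) + 1 with hn
  have hbound : ∀ S ∈ 𝒮, ∀ x ∈ S, x < n := by
    intro S hS x hx
    have h1 : x ≤ S.sup id := Finset.le_sup (f := id) hx
    have h2 : S.sup id ≤ 𝒮.sup fun S => S.sup id :=
      Finset.le_sup (f := fun S => S.sup id) hS
    omega
  set F : List (List (Fin n × Bool)) :=
    𝒮.toList.map (fun S =>
      ((List.finRange n).filter (fun i : Fin n => (i : ℕ) ∉ S)).map (fun i => (i, false))) with hF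
  refine ⟨n, F, by simp [hF], ?_⟩
  set toSet : (Fin n → Bool) → Finset ℕ :=
    fun σ => (Finset.univ.filter fun i : Fin n => σ i = true).image Fin.val with htoSet
  have key : ∀ σ : Fin n → Bool,
      (∃ T ∈ F, SatisfiesTerm σ T) ↔ toSet σ ∈ idealOf 𝒮 := by
    intro σ
    rw [mem_idealOf]
    constructor
    · rintro ⟨T, hT, hsat⟩
      simp only [hF, List.mem_map, Finset.mem_toList] at hT
      obtain ⟨S, hS, rfl⟩ := hT
      refine ⟨S, hS, ?_⟩
      intro a ha
      simp only [htoSet, Finset.mem_image, Finset.mem_filter, Finset.mem_univ,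
        true_and] at ha
      obtain ⟨i, hi, rfl⟩ := ha
      by_contra hc
      have h2 : σ i = false := by
        refine hsat (i, false) ?_
        simp only [List.mem_map, List.mem_filter, List.mem_finRange, true_and,
          Prod.mk.injEq, and_true]
        exact ⟨i, by simpa using hc, rfl⟩
      rw [h2] at hi
      simp at hi
    · rintro ⟨S, hS, hsub⟩
      refine ⟨((List.finRange n).filter (fun i : Fin n => (i : ℕ) ∉ S)).map (fun i => (i, false)),
        by simp only [hF, List.mem_map, Finset.mem_toList]; exact ⟨S, hS, rfl⟩, ?_⟩
      intro l hl
      simp only [List.mem_map, List.mem_filter, List.mem_finRange, true_and] at hl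
      obtain ⟨i, hi, rfl⟩ := hl
      simp only [decide_eq_true_eq] at hi
      by_contra hc
      have hσ : σ i = true := by
        cases hσ : σ i
        · exact absurd hσ hc
        · rfl
      have : (i : ℕ) ∈ toSet σ := by
        simp only [htoSet, Finset.mem_image, Finset.mem_filter, Finset.mem_univ, true_and]
        exact ⟨i, hσ, rfl⟩
      exact hi (hsub this)
  unfold solCount
  have hequiv : {σ : Fin n → Bool // ∃ T ∈ F, SatisfiesTerm σ T} ≃ ↥(idealOf 𝒮) := by
    have hret : ∀ A : Finset ℕ, A ∈ idealOf 𝒮 →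
        toSet (fun i : Fin n => decide ((i : ℕ) ∈ A)) = A := by
      intro A hA
      obtain ⟨S, hS, hsub⟩ := mem_idealOf.mp hA
      ext a
      simp only [htoSet, Finset.mem_image, Finset.mem_filter, Finset.mem_univ, true_and,
        decide_eq_true_eq]
      constructor
      · rintro ⟨i, hi, rfl⟩; exact hi
      · intro ha
        exact ⟨⟨a, hbound S hS a (hsub ha)⟩, ha, rfl⟩
    refine
      { toFun := fun σ => ⟨toSet σ.1, (key σ.1).mp σ.2⟩
        invFun := fun A => ⟨fun i => decide ((i : ℕ) ∈ A.1),
          (key _).mpr (by rw [hret A.1 A.2]; exact A.2)⟩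
        left_inv := ?_
        right_inv := ?_ }
    · rintro ⟨σ, hσ⟩
      apply Subtype.ext
      funext i
      simp only [htoSet, Finset.mem_image, Finset.mem_filter, Finset.mem_univ, true_and]
      cases hσi : σ i
      · simp only [decide_eq_false_iff_not]
        rintro ⟨j, hj, hji⟩
        have : j = i := Fin.val_injective hji
        rw [this, hσi] at hj
        exact absurd hj (by simp)
      · simp only [decide_eq_true_eq]
        exact ⟨i, hσi, rfl⟩
    · rintro ⟨A, hA⟩
      exact Subtype.ext (hret A hA)
  rw [Nat.card_congr hequiv, Nat.card_eq_finsetCard]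

/-- `β k ≤ α k`: a generating family of an ideal of size `k` yields a monotone
DNF with that many terms and exactly `k` satisfying assignments. -/
theorem beta_le_alpha (k : ℕ) (hk : 1 ≤ k) : beta k ≤ alpha k := by
  obtain ⟨𝒮₀, _, hcard₀⟩ := exists_ideal_card k hk
  have hne : {m | ∃ 𝒮 : Finset (Finset ℕ), 𝒮.card = m ∧ (idealOf 𝒮).card = k}.Nonempty :=
    ⟨𝒮₀.card, 𝒮₀, rfl, hcard₀⟩
  have hmem : alpha k ∈ {m | ∃ 𝒮 : Finset (Finset ℕ), 𝒮.card = m ∧ (idealOf 𝒮).card = k} :=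
    Nat.sInf_mem hne
  obtain ⟨𝒮, hScard, hIcard⟩ := hmem
  obtain ⟨n, Fm, hlen, hsol⟩ := family_dnf 𝒮
  exact Nat.sInf_le ⟨n, Fm, hlen.trans hScard, hsol.trans hIcard⟩
end

section
/- For every natural number k ≥ 1, log₂(bl(k) + 1) ≤ α(k), where α(k) is the minimum size of a set family generating an ideal of exactly k elements and bl(k) is the binary block count. -/
namespace BlockAux

def bl (n : ℕ) : ℕ :=
  if h : n = 0 then 0
  else (if n % 2 = 1 ∧ (n / 2) % 2 = 0 then 1 else 0) + bl (n / 2)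
termination_by n
decreasing_by exact Nat.div_lt_self (Nat.pos_of_ne_zero h) one_lt_two

lemma bl_zero : bl 0 = 0 := by rw [bl]; simp

lemma bl_pos_eq (n : ℕ) (h : n ≠ 0) :
    bl n = (if n % 2 = 1 ∧ (n / 2) % 2 = 0 then 1 else 0) + bl (n / 2) := by
  rw [bl]; simp [h]

lemma bl_two_mul (m : ℕ) : bl (2 * m) = bl m := by
  rcases Nat.eq_zero_or_pos m with rfl | hm
  · simp [bl_zero]
  · have h3 : 2 * m / 2 = m := by omega
    rw [bl_pos_eq _ (by omega), h3, if_neg (by omega), Nat.zero_add]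

lemma bl_two_mul_add_one (m : ℕ) :
    bl (2 * m + 1) = (if m % 2 = 0 then 1 else 0) + bl m := by
  rw [bl_pos_eq _ (by omega)]
  have h1 : (2 * m + 1) % 2 = 1 := by omega
  have h2 : (2 * m + 1) / 2 = m := by omega
  simp [h1, h2]

lemma blA : ∀ n : ℕ, bl (n + 1) ≤ bl n + 1 ∧ (n % 2 = 1 → bl (n + 1) ≤ bl n) := by
  intro n
  induction n using Nat.strong_induction_on with
  | _ n ih =>
    have part2 : n % 2 = 1 → bl (n + 1) ≤ bl n := by
      intro hodd
      obtain ⟨t, rfl⟩ : ∃ t, n = 2 * t + 1 := ⟨n / 2, by omega⟩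
      have h1 : 2 * t + 1 + 1 = 2 * (t + 1) := by ring
      rw [h1, bl_two_mul, bl_two_mul_add_one]
      rcases Nat.mod_two_eq_zero_or_one t with ht | ht
      · have h5 := (ih t (by omega)).1
        simp [ht]; omega
      · have h5 := (ih t (by omega)).2 ht
        simp [ht]; omega
    refine ⟨?_, part2⟩
    rcases Nat.mod_two_eq_zero_or_one n with hn | hn
    · obtain ⟨m, rfl⟩ : ∃ m, n = 2 * m := ⟨n / 2, by omega⟩
      rw [bl_two_mul_add_one, bl_two_mul]
      split <;> omega
    · have := part2 hn
      omega

lemma blB2 : ∀ m : ℕ, m % 2 = 1 → bl (m - 1) ≤ bl m := by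
  intro m hm
  obtain ⟨t, rfl⟩ : ∃ t, m = 2 * t + 1 := ⟨m / 2, by omega⟩
  have h1 : 2 * t + 1 - 1 = 2 * t := by omega
  rw [h1, bl_two_mul, bl_two_mul_add_one]
  split <;> omega

lemma blB1 : ∀ n : ℕ, 1 ≤ n → bl (n - 1) ≤ bl n + 1 := by
  intro n
  induction n using Nat.strong_induction_on with
  | _ n ih =>
    intro hn
    rcases Nat.mod_two_eq_zero_or_one n with h | h
    · obtain ⟨m, rfl⟩ : ∃ m, n = 2 * m := ⟨n / 2, by omega⟩
      have hm : 1 ≤ m := by omega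
      have h1 : 2 * m - 1 = 2 * (m - 1) + 1 := by omega
      rw [h1, bl_two_mul, bl_two_mul_add_one]
      rcases Nat.mod_two_eq_zero_or_one m with hm2 | hm2
      · have h2 : (m - 1) % 2 = 1 := by omega
        have h5 := ih m (by omega) hm
        simp [h2]; omega
      · have h2 : (m - 1) % 2 = 0 := by omega
        have h5 := blB2 m hm2
        simp [h2]; omega
    · have := blB2 n h
      omega

lemma blLadd : ∀ a n : ℕ, bl (n + 2 ^ a) ≤ bl n + 1 := by
  intro a
  induction a with
  | zero => intro n; simpa using (blA n).1
  | succ a ih =>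
    intro n
    rcases Nat.mod_two_eq_zero_or_one n with h | h
    · obtain ⟨m, rfl⟩ : ∃ m, n = 2 * m := ⟨n / 2, by omega⟩
      have h1 : 2 * m + 2 ^ (a + 1) = 2 * (m + 2 ^ a) := by ring
      rw [h1, bl_two_mul, bl_two_mul]
      exact ih m
    · obtain ⟨m, rfl⟩ : ∃ m, n = 2 * m + 1 := ⟨n / 2, by omega⟩
      have h1 : 2 * m + 1 + 2 ^ (a + 1) = 2 * (m + 2 ^ a) + 1 := by ring
      rw [h1, bl_two_mul_add_one, bl_two_mul_add_one]
      rcases Nat.eq_zero_or_pos a with rfl | ha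
      · simp only [pow_zero]
        rcases Nat.mod_two_eq_zero_or_one m with hm | hm
        · have h2 : (m + 1) % 2 = 1 := by omega
          have h5 := (blA m).1
          simp [hm, h2]; omega
        · have h2 : (m + 1) % 2 = 0 := by omega
          have h5 := (blA m).2 hm
          simp [hm, h2]; omega
      · have hpar : 2 ^ a % 2 = 0 := by
          obtain ⟨b, rfl⟩ : ∃ b, a = b + 1 := ⟨a - 1, by omega⟩
          have : 2 ^ (b + 1) = 2 * 2 ^ b := by ring
          omega
        have h2 : (m + 2 ^ a) % 2 = m % 2 := by omega
        have h5 := ih m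
        rw [h2]
        split <;> omega

lemma blLsub : ∀ a n : ℕ, 2 ^ a ≤ n → bl (n - 2 ^ a) ≤ bl n + 1 := by
  intro a
  induction a with
  | zero => intro n hn; simpa using blB1 n (by simpa using hn)
  | succ a ih =>
    intro n hn
    have hpow : 2 ^ (a + 1) = 2 * 2 ^ a := by ring
    rcases Nat.mod_two_eq_zero_or_one n with h | h
    · obtain ⟨m, rfl⟩ : ∃ m, n = 2 * m := ⟨n / 2, by omega⟩
      have hm : 2 ^ a ≤ m := by omega
      have h1 : 2 * m - 2 ^ (a + 1) = 2 * (m - 2 ^ a) := by omega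
      rw [h1, bl_two_mul, bl_two_mul]
      exact ih m hm
    · obtain ⟨m, rfl⟩ : ∃ m, n = 2 * m + 1 := ⟨n / 2, by omega⟩
      have hm : 2 ^ a ≤ m := by omega
      have h1 : 2 * m + 1 - 2 ^ (a + 1) = 2 * (m - 2 ^ a) + 1 := by omega
      rw [h1, bl_two_mul_add_one, bl_two_mul_add_one]
      rcases Nat.eq_zero_or_pos a with rfl | ha
      · simp only [pow_zero] at hm ⊢
        rcases Nat.mod_two_eq_zero_or_one m with hm2 | hm2
        · have h2 : (m - 1) % 2 = 1 := by omega
          have h5 := blB1 m hm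
          simp [hm2, h2]; omega
        · have h2 : (m - 1) % 2 = 0 := by omega
          have h5 := blB2 m hm2
          simp [hm2, h2]; omega
      · have hpar : 2 ^ a % 2 = 0 := by
          obtain ⟨b, rfl⟩ : ∃ b, a = b + 1 := ⟨a - 1, by omega⟩
          have : 2 ^ (b + 1) = 2 * 2 ^ b := by ring
          omega
        have h2 : (m - 2 ^ a) % 2 = m % 2 := by omega
        have h5 := ih m hm
        rw [h2]
        split <;> omega

end BlockAux

namespace BlockAux

lemma bl_one : bl 1 = 1 := by
  have := bl_two_mul_add_one 0
  simpa [bl_zero] using this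

lemma bl_two_pow (a : ℕ) : bl (2 ^ a) = 1 := by
  induction a with
  | zero => simpa using bl_one
  | succ a ih =>
    have h : 2 ^ (a + 1) = 2 * 2 ^ a := by ring
    rw [h, bl_two_mul, ih]

lemma blD : ∀ a : ℕ, ∀ x < 2 ^ a,
    bl (2 ^ a - 1 - x) ≤ bl x + 1 ∧ (x % 2 = 1 → bl (2 ^ a - 1 - x) ≤ bl x) := by
  intro a
  induction a with
  | zero =>
    intro x hx
    interval_cases x
    simp [bl_zero]
  | succ a ih =>
    intro x hx
    have hpow : 2 ^ (a + 1) = 2 * 2 ^ a := by ring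
    rcases Nat.eq_zero_or_pos a with rfl | ha
    · -- a = 0 : x < 2
      interval_cases x
      · constructor
        · simpa [bl_zero, bl_one] using Nat.le_succ 0
        · omega
      · simp [bl_one, bl_zero]
    · have hodd : (2 ^ a - 1) % 2 = 1 := by
        have hpar : 2 ^ a % 2 = 0 := by
          obtain ⟨b, rfl⟩ : ∃ b, a = b + 1 := ⟨a - 1, by omega⟩
          have : 2 ^ (b + 1) = 2 * 2 ^ b := by ring
          omega
        have : 1 ≤ 2 ^ a := Nat.one_le_two_pow
        omega
      rcases Nat.mod_two_eq_zero_or_one x with h | h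
      · obtain ⟨m, rfl⟩ : ∃ m, x = 2 * m := ⟨x / 2, by omega⟩
        have hm : m < 2 ^ a := by omega
        have h1 : 2 ^ (a + 1) - 1 - 2 * m = 2 * (2 ^ a - 1 - m) + 1 := by omega
        rw [h1, bl_two_mul_add_one, bl_two_mul]
        refine ⟨?_, by omega⟩
        rcases Nat.mod_two_eq_zero_or_one m with hm2 | hm2
        · have h2 : (2 ^ a - 1 - m) % 2 = 1 := by omega
          have h5 := (ih m hm).1
          simp [h2]; omega
        · have h2 : (2 ^ a - 1 - m) % 2 = 0 := by omega
          have h5 := (ih m hm).2 hm2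
          simp [h2]; omega
      · obtain ⟨m, rfl⟩ : ∃ m, x = 2 * m + 1 := ⟨x / 2, by omega⟩
        have hm : m < 2 ^ a := by omega
        have h1 : 2 ^ (a + 1) - 1 - (2 * m + 1) = 2 * (2 ^ a - 1 - m) := by omega
        rw [h1, bl_two_mul, bl_two_mul_add_one]
        have key : bl (2 ^ a - 1 - m) ≤ (if m % 2 = 0 then 1 else 0) + bl m := by
          rcases Nat.mod_two_eq_zero_or_one m with hm2 | hm2
          · have h5 := (ih m hm).1
            simp [hm2]; omega
          · have h5 := (ih m hm).2 hm2
            simp [hm2]; omega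
        exact ⟨by omega, fun _ => key⟩

lemma blLrev : ∀ a n : ℕ, n ≤ 2 ^ a → bl (2 ^ a - n) ≤ bl n + 1 := by
  intro a n hn
  rcases Nat.eq_zero_or_pos n with rfl | hpos
  · simp [bl_two_pow, bl_zero]
  · have hx : n - 1 < 2 ^ a := by omega
    have heq : 2 ^ a - n = 2 ^ a - 1 - (n - 1) := by omega
    rw [heq]
    rcases Nat.mod_two_eq_zero_or_one n with h | h
    · have h2 : (n - 1) % 2 = 1 := by omega
      have h5 := (blD a (n - 1) hx).2 h2
      have h6 := blB1 n hpos
      omega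
    · have h5 := (blD a (n - 1) hx).1
      have h6 := blB2 n h
      omega

lemma blTri (m n a : ℕ) (h : m = n + 2 ^ a ∨ m + 2 ^ a = n ∨ m + n = 2 ^ a) :
    bl m ≤ bl n + 1 := by
  rcases h with h | h | h
  · subst h; exact blLadd a n
  · have h1 : 2 ^ a ≤ n := by omega
    have h2 : m = n - 2 ^ a := by omega
    subst h2; exact blLsub a n h1
  · have h1 : n ≤ 2 ^ a := by omega
    have h2 : m = 2 ^ a - n := by omega
    subst h2; exact blLrev a n h1

lemma blInt (x s : ℤ) (a : ℕ) (hs : s = 2 ^ a ∨ s = -2 ^ a) :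
    bl (x + s).natAbs ≤ bl x.natAbs + 1 := by
  obtain ⟨y, hy⟩ : ∃ y : ℕ, y = 2 ^ a := ⟨2 ^ a, rfl⟩
  have h2 : ((y : ℕ) : ℤ) = 2 ^ a := by rw [hy]; push_cast; ring
  have hs' : s = (y : ℤ) ∨ s = -(y : ℤ) := by rw [h2]; exact hs
  apply blTri _ _ a
  rw [← hy]
  omega

def IsSP (x : ℤ) : Prop := ∃ a : ℕ, x = 2 ^ a ∨ x = -2 ^ a

lemma bl_sum_le : ∀ l : List ℤ, (∀ x ∈ l, IsSP x) → bl l.sum.natAbs ≤ l.length := by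
  intro l
  induction l with
  | nil => simp [bl_zero]
  | cons x l ih =>
    intro h
    obtain ⟨a, ha⟩ := h x List.mem_cons_self
    have h1 := blInt l.sum x a ha
    have h2 := ih fun y hy => h y (List.mem_cons_of_mem _ hy)
    have h3 : (x :: l).sum = l.sum + x := by rw [List.sum_cons]; ring
    rw [h3]
    simp only [List.length_cons]
    omega

end BlockAux


namespace BlockAux

lemma sum_map_neg : ∀ l : List ℤ, (l.map fun x => -x).sum = -l.sum
  | [] => by simp
  | a :: t => by simp only [List.map_cons, List.sum_cons, sum_map_neg t]; ring

lemma idealOf_empty : idealOf ∅ = ∅ := by simp [idealOf]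

lemma ideal_rep_aux : ∀ n : ℕ, ∀ 𝒮 : Finset (Finset ℕ), 𝒮.card ≤ n →
    ∃ l : List ℤ, (∀ x ∈ l, IsSP x) ∧ l.length + 1 ≤ 2 ^ n ∧
      l.sum = ((idealOf 𝒮).card : ℤ) := by
  intro n
  induction n with
  | zero =>
    intro 𝒮 hc
    have h0 : 𝒮 = ∅ := Finset.card_eq_zero.mp (by omega)
    subst h0
    exact ⟨[], by simp, by simp, by simp [idealOf_empty]⟩
  | succ n ih =>
    intro 𝒮 hc
    rcases eq_or_ne 𝒮 ∅ with rfl | hne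
    · exact ⟨[], by simp, by simpa using Nat.one_le_two_pow, by simp [idealOf_empty]⟩
    · obtain ⟨S, hS⟩ := Finset.nonempty_iff_ne_empty.mpr hne
      set 𝒮' := 𝒮.erase S with h𝒮'
      have hins : 𝒮 = insert S 𝒮' := (Finset.insert_erase hS).symm
      have key : idealOf 𝒮 = S.powerset ∪ idealOf 𝒮' := by
        rw [hins, idealOf, Finset.sup_insert]
        rfl
      have inter : S.powerset ∩ idealOf 𝒮' = idealOf (𝒮'.image fun T => S ∩ T) := by
        ext T
        simp only [Finset.mem_inter, Finset.mem_powerset, idealOf, Finset.mem_sup,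
          Finset.mem_image]
        constructor
        · rintro ⟨h1, U, hU, h2⟩
          exact ⟨S ∩ U, ⟨U, hU, rfl⟩, Finset.subset_inter h1 h2⟩
        · rintro ⟨V, ⟨U, hU, rfl⟩, h2⟩
          exact ⟨h2.trans Finset.inter_subset_left,
            U, hU, h2.trans Finset.inter_subset_right⟩
      have hcard' : 𝒮'.card ≤ n := by
        have h6 := Finset.card_erase_of_mem hS
        rw [← h𝒮'] at h6
        have h7 : 1 ≤ 𝒮.card := Finset.card_pos.mpr ⟨S, hS⟩
        omega
      obtain ⟨l₁, hl₁, hlen₁, hsum₁⟩ := ih 𝒮' hcard'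
      obtain ⟨l₂, hl₂, hlen₂, hsum₂⟩ :=
        ih (𝒮'.image fun T => S ∩ T) (le_trans Finset.card_image_le hcard')
      have hunion :
          ((idealOf 𝒮).card : ℤ) + ((idealOf (𝒮'.image fun T => S ∩ T)).card : ℤ)
            = 2 ^ S.card + ((idealOf 𝒮').card : ℤ) := by
        have h1 := Finset.card_union_add_card_inter S.powerset (idealOf 𝒮')
        rw [inter, Finset.card_powerset] at h1
        rw [key]
        exact_mod_cast h1
      refine ⟨((2 : ℤ) ^ S.card) :: (l₁ ++ l₂.map fun x => -x), ?_, ?_, ?_⟩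
      · intro x hx
        rcases List.mem_cons.mp hx with rfl | hx
        · exact ⟨S.card, Or.inl rfl⟩
        · rcases List.mem_append.mp hx with hx | hx
          · exact hl₁ x hx
          · obtain ⟨y, hy, rfl⟩ := List.mem_map.mp hx
            obtain ⟨a, ha | ha⟩ := hl₂ y hy
            · exact ⟨a, Or.inr (by rw [ha])⟩
            · exact ⟨a, Or.inl (by rw [ha]; ring)⟩
      · simp only [List.length_cons, List.length_append, List.length_map]
        have : 2 ^ (n + 1) = 2 ^ n + 2 ^ n := by ring
        omega
      · simp only [List.sum_cons, List.sum_append]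
        have hneg := sum_map_neg l₂
        rw [hneg, hsum₁, hsum₂]
        linarith [hunion]

lemma bl_ideal (𝒮 : Finset (Finset ℕ)) :
    bl (idealOf 𝒮).card + 1 ≤ 2 ^ 𝒮.card := by
  obtain ⟨l, h1, h2, h3⟩ := ideal_rep_aux 𝒮.card 𝒮 le_rfl
  have h4 := bl_sum_le l h1
  rw [h3] at h4
  simp only [Int.natAbs_natCast] at h4
  omega

end BlockAux


namespace BlockAux

lemma filter_range_eq (k N : ℕ) (h : k + 1 ≤ N) :
    ((Finset.range N).filter fun i => k.testBit i ∧ ¬k.testBit (i + 1)).card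
      = blockCount k := by
  unfold blockCount
  congr 1
  ext i
  simp only [Finset.mem_filter, Finset.mem_range]
  constructor
  · rintro ⟨h1, h2⟩
    refine ⟨?_, h2⟩
    have h3 : 2 ^ i ≤ k := Nat.ge_two_pow_of_testBit h2.1
    have h4 : i < 2 ^ i := Nat.lt_two_pow_self
    omega
  · rintro ⟨h1, h2⟩
    exact ⟨by omega, h2⟩

lemma blockCount_rec (k : ℕ) (hk : k ≠ 0) :
    blockCount k = (if k % 2 = 1 ∧ (k / 2) % 2 = 0 then 1 else 0) + blockCount (k / 2) := by
  have hsplit : Finset.range (k + 1) = insert 0 ((Finset.range k).image fun j => j + 1) := by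
    ext i
    simp only [Finset.mem_range, Finset.mem_insert, Finset.mem_image]
    constructor
    · intro hi
      rcases Nat.eq_zero_or_pos i with rfl | hpos
      · exact Or.inl rfl
      · exact Or.inr ⟨i - 1, by omega, by omega⟩
    · rintro (rfl | ⟨j, hj, rfl⟩) <;> omega
  rw [blockCount, hsplit, Finset.filter_insert]
  have himg := Finset.filter_image (s := Finset.range k) (f := fun j => j + 1)
    (p := fun i => k.testBit i ∧ ¬k.testBit (i + 1))
  have hinj : Function.Injective fun j : ℕ => j + 1 := fun a b h => by simpa using h
  have hbit0 : k.testBit 0 = decide (k % 2 = 1) := Nat.testBit_zero k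
  have hbit1 : k.testBit 1 = decide ((k / 2) % 2 = 1) := by
    rw [show (1 : ℕ) = Nat.succ 0 from rfl, Nat.testBit_succ, Nat.testBit_zero]
  have hcard2 :
      (((Finset.range k).image fun j => j + 1).filter
        fun i => k.testBit i ∧ ¬k.testBit (i + 1)).card = blockCount (k / 2) := by
    rw [himg, Finset.card_image_of_injective _ hinj]
    have hpred : ∀ j : ℕ, (k.testBit (j + 1) ∧ ¬k.testBit (j + 1 + 1))
        ↔ ((k / 2).testBit j ∧ ¬(k / 2).testBit (j + 1)) := by
      intro j
      rw [show j + 1 = Nat.succ j from rfl, show j + 1 + 1 = Nat.succ (j + 1) from rfl,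
        Nat.testBit_succ, Nat.testBit_succ]
    have : ((Finset.range k).filter fun j => k.testBit (j + 1) ∧ ¬k.testBit (j + 1 + 1))
        = (Finset.range k).filter fun j => (k / 2).testBit j ∧ ¬(k / 2).testBit (j + 1) := by
      apply Finset.filter_congr
      intro j _
      exact hpred j
    rw [this]
    exact filter_range_eq (k / 2) k (by omega)
  by_cases h0 : k.testBit 0 ∧ ¬k.testBit 1
  · rw [if_pos h0]
    have h0' : k % 2 = 1 ∧ (k / 2) % 2 = 0 := by
      obtain ⟨ha, hb⟩ := h0
      rw [hbit0] at ha
      rw [hbit1] at hb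
      simp at ha hb
      omega
    rw [if_pos h0']
    rw [Finset.card_insert_of_notMem]
    · rw [hcard2]; omega
    · intro hmem
      have := Finset.mem_filter.mp hmem |>.1
      simp only [Finset.mem_image] at this
      obtain ⟨j, _, hj⟩ := this
      omega
  · rw [if_neg h0]
    have h0' : ¬(k % 2 = 1 ∧ (k / 2) % 2 = 0) := by
      intro ⟨ha, hb⟩
      apply h0
      constructor
      · rw [hbit0]; simp [ha]
      · rw [hbit1]; simp; omega
    rw [if_neg h0', hcard2]
    omega

lemma blockCount_eq_bl : ∀ k : ℕ, blockCount k = bl k := by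
  intro k
  induction k using Nat.strong_induction_on with
  | _ k ih =>
    rcases eq_or_ne k 0 with rfl | hk
    · rw [bl_zero]
      unfold blockCount
      rw [Finset.card_eq_zero, Finset.filter_eq_empty_iff]
      intro i _
      simp [Nat.zero_testBit]
    · rw [blockCount_rec k hk, bl_pos_eq k hk,
        ih (k / 2) (Nat.div_lt_self (Nat.pos_of_ne_zero hk) one_lt_two)]

end BlockAux


namespace BlockAux

lemma exists_family (k : ℕ) (hk : 1 ≤ k) :
    ∃ 𝒮 : Finset (Finset ℕ), (idealOf 𝒮).card = k := by
  refine ⟨insert ∅ ((Finset.range (k - 1)).image fun i => ({i} : Finset ℕ)), ?_⟩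
  have hid : idealOf (insert ∅ ((Finset.range (k - 1)).image fun i => ({i} : Finset ℕ)))
      = insert ∅ ((Finset.range (k - 1)).image fun i => ({i} : Finset ℕ)) := by
    ext T
    simp only [idealOf, Finset.mem_sup, Finset.mem_insert, Finset.mem_image,
      Finset.mem_powerset, Finset.mem_range]
    constructor
    · rintro ⟨S, hS, hT⟩
      rcases hS with rfl | ⟨i, hi, rfl⟩
      · exact Or.inl (Finset.subset_empty.mp hT)
      · rcases Finset.subset_singleton_iff.mp hT with rfl | rfl
        · exact Or.inl rfl
        · exact Or.inr ⟨i, hi, rfl⟩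
    · rintro (rfl | ⟨i, hi, rfl⟩)
      · exact ⟨∅, Or.inl rfl, Finset.Subset.refl _⟩
      · exact ⟨{i}, Or.inr ⟨i, hi, rfl⟩, Finset.Subset.refl _⟩
  rw [hid, Finset.card_insert_of_notMem, Finset.card_image_of_injective _
    (fun a b h => Finset.singleton_injective h), Finset.card_range]
  · omega
  · simp only [Finset.mem_image]
    rintro ⟨i, _, hi⟩
    exact Finset.singleton_ne_empty i hi

lemma blockCount_add_one_le (k : ℕ) (hk : 1 ≤ k) :
    blockCount k + 1 ≤ 2 ^ alpha k := by
  have hne : {m | ∃ 𝒮 : Finset (Finset ℕ), 𝒮.card = m ∧ (idealOf 𝒮).card = k}.Nonempty := by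
    obtain ⟨𝒮, h𝒮⟩ := exists_family k hk
    exact ⟨𝒮.card, 𝒮, rfl, h𝒮⟩
  obtain ⟨𝒮, hcard, hid⟩ := Nat.sInf_mem hne
  have hb := bl_ideal 𝒮
  rw [hid, hcard] at hb
  rw [blockCount_eq_bl]
  exact hb

end BlockAux


/-- Lower bound: `log₂ (bl k + 1) ≤ α k`. -/
theorem blockCount_lower_bound_alpha (k : ℕ) (hk : 1 ≤ k) :
    Real.logb 2 (blockCount k + 1) ≤ alpha k := by
  have h1 := BlockAux.blockCount_add_one_le k hk
  have h2 : ((blockCount k : ℝ) + 1) ≤ (2 : ℝ) ^ alpha k := by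
    exact_mod_cast h1
  have h3 : Real.logb 2 (blockCount k + 1) ≤ Real.logb 2 ((2 : ℝ) ^ alpha k) :=
    Real.logb_le_logb_of_le one_lt_two (by positivity) h2
  calc Real.logb 2 (blockCount k + 1) ≤ Real.logb 2 ((2 : ℝ) ^ alpha k) := h3
    _ = alpha k := by
        rw [Real.logb_pow, Real.logb_self_eq_one one_lt_two, mul_one]
end

section
/- For every natural number q ≥ 1 and integers a_0, ..., a_q with |a_j| ≤ q − 1 for all j, the number N = 2^{3q²−1} − Σ_{j=0}^{q} a_j·2^{jq} + 1 satisfies α(N) ≤ (q+1)·⌈log₂ q⌉ + 3, where α is the minimum ideal-generator count. -/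
namespace AlphaProof


lemma mem_idealOf {𝒮 : Finset (Finset ℕ)} {T : Finset ℕ} :
    T ∈ idealOf 𝒮 ↔ ∃ S ∈ 𝒮, T ⊆ S := by
  simp [idealOf, Finset.mem_sup, Finset.mem_powerset]

def evens (c : ℕ) : Finset ℕ := (Finset.range c).image fun i => 2 * i

def odds (g g' : ℕ) : Finset ℕ := (Finset.Ico g g').image fun i => 2 * i + 1

lemma mem_evens {c x : ℕ} : x ∈ evens c ↔ ∃ i, i < c ∧ 2 * i = x := by
  simp [evens]

lemma mem_odds {g g' x : ℕ} : x ∈ odds g g' ↔ ∃ i, (g ≤ i ∧ i < g') ∧ 2 * i + 1 = x := by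
  simp [odds]

lemma card_evens (c : ℕ) : (evens c).card = c := by
  rw [evens, Finset.card_image_of_injective _ (fun a b h => by omega)]
  simp

lemma card_odds (g g' : ℕ) : (odds g g').card = g' - g := by
  rw [odds, Finset.card_image_of_injective _ (fun a b h => by omega)]
  simp

lemma evens_mono {c c' : ℕ} (h : c ≤ c') : evens c ⊆ evens c' :=
  Finset.image_subset_image (by simpa using Finset.range_subset_range.mpr h)

lemma odds_mono {g1 g2 g1' g2' : ℕ} (h1 : g1' ≤ g1) (h2 : g2 ≤ g2') :
    odds g1 g2 ⊆ odds g1' g2' :=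
  Finset.image_subset_image (Finset.Ico_subset_Ico h1 h2)

lemma disj_eo {c g g' : ℕ} : Disjoint (evens c) (odds g g') := by
  rw [Finset.disjoint_left]
  intro x hx hy
  rw [mem_evens] at hx
  rw [mem_odds] at hy
  obtain ⟨i, _, rfl⟩ := hx
  obtain ⟨i', _, h⟩ := hy
  omega

def Achv (c g m n : ℕ) : Prop :=
  ∃ 𝒮 : Finset (Finset ℕ), 𝒮.card = m ∧ (idealOf 𝒮).card = n ∧
    (∀ S ∈ 𝒮, S ⊆ evens c ∪ odds 0 g) ∧ ∃ S ∈ 𝒮, evens c ⊆ S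

lemma achv_base (c d : ℕ) (h : c ≤ d) : Achv c (d - c) 1 (2 ^ d) := by
  refine ⟨{evens c ∪ odds 0 (d - c)}, by simp, ?_, by simp,
    ⟨_, Finset.mem_singleton_self _, Finset.subset_union_left⟩⟩
  rw [idealOf, Finset.sup_singleton, Finset.card_powerset,
    Finset.card_union_of_disjoint disj_eo, card_evens, card_odds]
  congr 1
  omega

lemma achv_step {c g m n : ℕ} (h : Achv c g m n) {c' d : ℕ} (h1 : c ≤ c') (h2 : c' ≤ d)
    (h3 : c < c' ∨ c' < d) : Achv c' (g + (d - c')) (m + 1) (n + 2 ^ d - 2 ^ c) := by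
  obtain ⟨𝒮, hcard, hid, hsub, S₀, hS₀, hS₀c⟩ := h
  set S' : Finset ℕ := evens c' ∪ odds g (g + (d - c')) with hS'def
  have hS'card : S'.card = d := by
    rw [hS'def, Finset.card_union_of_disjoint disj_eo, card_evens, card_odds]
    omega
  have hnotmem : S' ∉ 𝒮 := by
    intro hmem
    have hsubS' := hsub S' hmem
    rcases h3 with h3 | h3
    · have hx : 2 * (c' - 1) ∈ S' := by
        rw [hS'def]
        apply Finset.mem_union_left
        rw [mem_evens]
        exact ⟨c' - 1, by omega, rfl⟩
      have hx2 := hsubS' hx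
      rw [Finset.mem_union, mem_evens, mem_odds] at hx2
      rcases hx2 with ⟨i, hi, he⟩ | ⟨i, hi, he⟩ <;> omega
    · have hx : 2 * g + 1 ∈ S' := by
        rw [hS'def]
        apply Finset.mem_union_right
        rw [mem_odds]
        exact ⟨g, ⟨le_refl _, by omega⟩, rfl⟩
      have hx2 := hsubS' hx
      rw [Finset.mem_union, mem_evens, mem_odds] at hx2
      rcases hx2 with ⟨i, hi, he⟩ | ⟨i, hi, he⟩ <;> omega
  have hkey : S'.powerset ∩ idealOf 𝒮 = (evens c).powerset := by
    ext T
    simp only [Finset.mem_inter, Finset.mem_powerset, mem_idealOf]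
    constructor
    · rintro ⟨hTS', S₁, hS₁, hTS₁⟩
      intro x hx
      have hx1 := hTS' hx
      have hx2 := hsub S₁ hS₁ (hTS₁ hx)
      rw [hS'def, Finset.mem_union, mem_evens, mem_odds] at hx1
      rw [Finset.mem_union, mem_evens, mem_odds] at hx2
      rw [mem_evens]
      rcases hx1 with ⟨i, hi, he⟩ | ⟨i, hi, he⟩ <;>
        rcases hx2 with ⟨i', hi', he'⟩ | ⟨i', hi', he'⟩
      · exact ⟨i', hi', he'⟩
      · omega
      · omega
      · omega
    · intro hT
      have hTc : T ⊆ evens c := hT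
      refine ⟨hTc.trans ?_, S₀, hS₀, hTc.trans hS₀c⟩
      rw [hS'def]
      exact (evens_mono h1).trans Finset.subset_union_left
  have hid' : idealOf (insert S' 𝒮) = S'.powerset ∪ idealOf 𝒮 := by
    rw [idealOf, Finset.sup_insert, idealOf, Finset.sup_eq_union]
  refine ⟨insert S' 𝒮, ?_, ?_, ?_, S', Finset.mem_insert_self _ _, ?_⟩
  · rw [Finset.card_insert_of_notMem hnotmem, hcard]
  · rw [hid']
    have h4 := Finset.card_union_add_card_inter S'.powerset (idealOf 𝒮)
    rw [hkey, Finset.card_powerset, Finset.card_powerset, hS'card, card_evens, hid] at h4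
    have := Nat.eq_sub_of_add_eq h4
    rw [this]
    omega
  · intro S hS
    rcases Finset.mem_insert.mp hS with rfl | hS
    · exact Finset.union_subset_union (le_refl _) (odds_mono (Nat.zero_le _) (le_refl _))
    · exact (hsub S hS).trans
        (Finset.union_subset_union (evens_mono h1) (odds_mono (le_refl _) (Nat.le_add_right _ _)))
  · rw [hS'def]
    exact Finset.subset_union_left

lemma alpha_le_of_achv {c g m n : ℕ} (h : Achv c g m n) : alpha n ≤ m := by
  obtain ⟨𝒮, h1, h2, _⟩ := h
  exact Nat.sInf_le ⟨𝒮, h1, h2⟩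

inductive Ach : ℕ → ℕ → ℤ → Prop
  | base (c d : ℕ) (h : c ≤ d) : Ach c 1 (2 ^ d - 2 ^ c)
  | step {c m : ℕ} {v : ℤ} (hach : Ach c m v) (c' d : ℕ) (h1 : c ≤ c') (h2 : c' ≤ d)
      (h3 : c < c' ∨ c' < d) : Ach c' (m + 1) (v + 2 ^ d - 2 ^ c')

lemma ach_sound {c m : ℕ} {v : ℤ} (h : Ach c m v) :
    ∃ g n, Achv c g m n ∧ (n : ℤ) = v + 2 ^ c := by
  induction h with
  | base c d h =>
    refine ⟨d - c, 2 ^ d, achv_base c d h, by push_cast; ring⟩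
  | step hach c' d h1 h2 h3 ih =>
    obtain ⟨g, n, hA, hn⟩ := ih
    refine ⟨g + (d - c'), n + 2 ^ d - 2 ^ _, achv_step hA h1 h2 h3, ?_⟩
    have hle : (2:ℕ) ^ _ ≤ n + 2 ^ d :=
      le_trans (Nat.pow_le_pow_right (by norm_num) (h1.trans h2)) (Nat.le_add_left _ n)
    rw [Nat.cast_sub hle]
    push_cast
    rw [hn]
    ring



lemma bitsum : ∀ (L n : ℕ), n < 2 ^ L →
    (∑ i ∈ Finset.range L, (if n.testBit i then 2 ^ i else 0)) = n := by
  intro L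
  induction L with
  | zero => intro n h; simp; omega
  | succ L ih =>
    intro n h
    have hp : 2 ^ (L + 1) = 2 * 2 ^ L := by ring
    have h2 : n / 2 < 2 ^ L := by omega
    have hrec := ih (n / 2) h2
    rw [Finset.sum_range_succ']
    have heq : ∀ i, (if n.testBit (i + 1) then (2:ℕ) ^ (i+1) else 0)
        = 2 * (if (n / 2).testBit i then 2 ^ i else 0) := by
      intro i
      rw [Nat.testBit_succ]
      by_cases hb : (n / 2).testBit i <;> simp [hb] <;> ring
    rw [Finset.sum_congr rfl fun i _ => heq i, ← Finset.mul_sum, hrec]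
    have h0 : (if n.testBit 0 then (2:ℕ) ^ 0 else 0) = n % 2 := by
      rw [Nat.testBit_zero]
      rcases Nat.mod_two_eq_zero_or_one n with h | h <;> simp [h]
    rw [h0]
    omega




def Lq (q : ℕ) : ℕ := Nat.clog 2 q
def Tq (q : ℕ) : ℕ := 3 * q ^ 2 - 1
def Kq (q : ℕ) : ℕ := (q + 1) * Lq q

def a' (q : ℕ) (a : Fin (q + 1) → ℤ) : ℕ → ℤ :=
  fun j => if h : j < q + 1 then a ⟨j, h⟩ else 0

def eF (q : ℕ) : ℕ → ℕ := fun t => t / Lq q * q + t % Lq q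

def dig (q : ℕ) (a : Fin (q + 1) → ℤ) : ℕ → ℤ :=
  fun t => -(a' q a (t / Lq q)).sign *
    (if (a' q a (t / Lq q)).natAbs.testBit (t % Lq q) then 1 else 0)

def DD (q : ℕ) (a : Fin (q + 1) → ℤ) : ℕ → ℤ :=
  fun t => ∑ s ∈ Finset.range t, dig q a s * 2 ^ eF q s

section basic

variable (q : ℕ) (hq : 1 ≤ q)

-- clog facts
lemma L_le (hq : 1 ≤ q) : Lq q ≤ q - 1 := by
  have h1 : q ≤ 2 ^ (q - 1) := by
    have := Nat.lt_two_pow_self (n := q - 1)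
    omega
  calc Lq q ≤ Nat.clog 2 (2 ^ (q - 1)) := Nat.clog_mono_right 2 h1
    _ = q - 1 := Nat.clog_pow 2 (q - 1) (by norm_num)

lemma q_le_pow (hq : 1 ≤ q) : q ≤ 2 ^ Lq q := Nat.le_pow_clog (by norm_num) q

lemma L_pos_q (hL : 1 ≤ Lq q) : 2 ≤ q := by
  by_contra h
  interval_cases q <;> simp [Lq, Nat.clog] at hL <;> omega

lemma T_big (hq : 1 ≤ q) : 2 ≤ Tq q := by
  have : 1 ≤ q ^ 2 := Nat.one_le_pow _ _ (by omega)
  unfold Tq; omega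

-- eF bound for t < K
lemma eF_lt_bound (hq : 1 ≤ q) {t : ℕ} (ht : t < Kq q) :
    eF q t + 1 ≤ q * q + Lq q := by
  have hL : 1 ≤ Lq q := by
    by_contra h
    have : Lq q = 0 := by omega
    rw [Kq, this] at ht; omega
  have hdiv : t / Lq q < q + 1 := by
    rw [Nat.div_lt_iff_lt_mul hL]
    rw [Kq] at ht; omega
  have hmod : t % Lq q < Lq q := Nat.mod_lt _ hL
  have h1 : t / Lq q * q ≤ q * q := Nat.mul_le_mul_right _ (by omega)
  show t / Lq q * q + t % Lq q + 1 ≤ q * q + Lq q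
  linarith

lemma factA (hq : 1 ≤ q) (hL : 1 ≤ Lq q) :
    q * q + Lq q + Kq q + 2 ≤ 3 * q ^ 2 := by
  have h2q : 2 ≤ q := L_pos_q q hL
  have hLs : Lq q ≤ q - 1 := L_le q hq
  obtain ⟨s, rfl⟩ : ∃ s, q = s + 2 := ⟨q - 2, by omega⟩
  have hLs' : Lq (s + 2) ≤ s + 1 := by omega
  rw [Kq]
  nlinarith [hLs', sq_nonneg (s + 2)]

lemma factB (hq : 1 ≤ q) : eF q (Kq q) + Kq q + 1 ≤ Tq q := by
  by_cases hL : 1 ≤ Lq q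
  · have h2q : 2 ≤ q := L_pos_q q hL
    have hLs : Lq q ≤ q - 1 := L_le q hq
    have hdiv : Kq q / Lq q = q + 1 := by
      rw [Kq, Nat.mul_div_cancel _ hL]
    have hmod : Kq q % Lq q = 0 := by
      rw [Kq, Nat.mul_mod_left]
    have heF : eF q (Kq q) = (q + 1) * q := by
      rw [eF, hdiv, hmod]; omega
    rw [heF, Tq, Kq]
    obtain ⟨s, rfl⟩ : ∃ s, q = s + 2 := ⟨q - 2, by omega⟩
    have hLs' : Lq (s + 2) ≤ s + 1 := by omega
    have key : (s + 2 + 1) * (s + 2) + (s + 2 + 1) * Lq (s + 2) + 1 + 1 ≤ 3 * (s + 2) ^ 2 := by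
      nlinarith [hLs']
    omega
  · have hL0 : Lq q = 0 := by omega
    have hK0 : Kq q = 0 := by rw [Kq, hL0]; ring
    have heF : eF q 0 = 0 := by simp [eF]
    rw [hK0, heF]
    have := T_big q hq
    omega

lemma eF_mono (hq : 1 ≤ q) {t : ℕ} (ht : t + 1 ≤ Kq q) : eF q t ≤ eF q (t + 1) := by
  have hL : 1 ≤ Lq q := by
    by_contra h
    have : Lq q = 0 := by omega
    rw [Kq, this] at ht; omega
  have hLq : Lq q ≤ q := by have := L_le q hq; omega
  set L := Lq q with hLdef
  have hdm := Nat.div_add_mod t L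
  set j := t / L with hj
  set i := t % L with hi
  have hiL : i < L := Nat.mod_lt _ hL
  rcases Nat.lt_or_ge (i + 1) L with hc | hc
  · have ht1 : t + 1 = L * j + (i + 1) := by omega
    have hdiv : (t + 1) / L = j := by
      rw [ht1, Nat.mul_add_div hL, Nat.div_eq_of_lt hc]
      omega
    have hmod : (t + 1) % L = i + 1 := by
      rw [ht1, Nat.mul_add_mod, Nat.mod_eq_of_lt hc]
    unfold eF
    rw [← hLdef, hdiv, hmod, ← hj, ← hi]
    omega
  · have hiL1 : i + 1 = L := by omega
    have ht1 : t + 1 = L * (j + 1) := by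
      have hh : L * (j + 1) = L * j + L := by ring
      omega
    have hdiv : (t + 1) / L = j + 1 := by
      rw [ht1, Nat.mul_div_cancel_left _ hL]
    have hmod : (t + 1) % L = 0 := by
      rw [ht1, Nat.mul_mod_right]
    unfold eF
    rw [← hLdef, hdiv, hmod, ← hj, ← hi]
    have : j * q + q = (j + 1) * q := by ring
    omega

end basic

section sums

variable (q : ℕ) (a : Fin (q + 1) → ℤ)

lemma natAbs_lt (hq : 1 ≤ q) (ha : ∀ j, |a j| ≤ (q : ℤ) - 1) (j : ℕ) :
    (a' q a j).natAbs < 2 ^ Lq q := by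
  have hpow : q ≤ 2 ^ Lq q := q_le_pow q hq
  rcases lt_or_ge j (q + 1) with h | h
  · have h1 := ha ⟨j, h⟩
    rw [a', dif_pos h]
    have h2 : ((a ⟨j, h⟩).natAbs : ℤ) ≤ (q : ℤ) - 1 := by
      rwa [Int.abs_eq_natAbs] at h1
    omega
  · rw [a', dif_neg (by omega)]
    simpa using Nat.pos_pow_of_pos _ (by norm_num)

lemma block_sum (hq : 1 ≤ q) (ha : ∀ j, |a j| ≤ (q : ℤ) - 1) (hL : 1 ≤ Lq q) (j : ℕ) :
    (∑ i ∈ Finset.range (Lq q), dig q a (j * Lq q + i) * 2 ^ eF q (j * Lq q + i))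
      = -(a' q a j) * 2 ^ (j * q) := by
  have hsum : ∀ i ∈ Finset.range (Lq q),
      dig q a (j * Lq q + i) * 2 ^ eF q (j * Lq q + i)
      = -(a' q a j).sign * ((if (a' q a j).natAbs.testBit i then (1:ℤ) else 0) * 2 ^ i)
          * 2 ^ (j * q) := by
    intro i hi
    rw [Finset.mem_range] at hi
    have hdiv : (j * Lq q + i) / Lq q = j := by
      rw [mul_comm, Nat.mul_add_div hL, Nat.div_eq_of_lt hi]
      omega
    have hmod : (j * Lq q + i) % Lq q = i := by
      rw [mul_comm, Nat.mul_add_mod, Nat.mod_eq_of_lt hi]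
    rw [dig, eF, hdiv, hmod, pow_add]
    ring
  rw [Finset.sum_congr rfl hsum]
  rw [← Finset.sum_mul, ← Finset.mul_sum]
  have hbits : (∑ i ∈ Finset.range (Lq q),
      (if (a' q a j).natAbs.testBit i then (1:ℤ) else 0) * 2 ^ i)
      = ((a' q a j).natAbs : ℤ) := by
    have hb := bitsum (Lq q) (a' q a j).natAbs (natAbs_lt q a hq ha j)
    calc (∑ i ∈ Finset.range (Lq q),
        (if (a' q a j).natAbs.testBit i then (1:ℤ) else 0) * 2 ^ i)
        = ((∑ i ∈ Finset.range (Lq q),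
            if (a' q a j).natAbs.testBit i then (2:ℕ) ^ i else 0 : ℕ) : ℤ) := by
          push_cast
          apply Finset.sum_congr rfl
          intro i _
          by_cases hbb : (a' q a j).natAbs.testBit i <;> simp [hbb]
      _ = ((a' q a j).natAbs : ℤ) := by rw [hb]
  rw [hbits]
  have hsgn := Int.sign_mul_natAbs (a' q a j)
  linear_combination (-(2:ℤ) ^ (j * q)) * hsgn

lemma DD_blocks (J : ℕ) : DD q a (J * Lq q)
    = ∑ j ∈ Finset.range J, ∑ i ∈ Finset.range (Lq q),
        dig q a (j * Lq q + i) * 2 ^ eF q (j * Lq q + i) := by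
  induction J with
  | zero => simp [DD]
  | succ J ih =>
    have hJ : (J + 1) * Lq q = J * Lq q + Lq q := by ring
    rw [hJ, DD, Finset.sum_range_add]
    rw [DD] at ih
    rw [ih, Finset.sum_range_succ]

lemma DD_K (hq : 1 ≤ q) (ha : ∀ j, |a j| ≤ (q : ℤ) - 1) :
    DD q a (Kq q) = -∑ j : Fin (q + 1), a j * 2 ^ ((j : ℕ) * q) := by
  by_cases hL : 1 ≤ Lq q
  · rw [show Kq q = (q + 1) * Lq q from rfl, DD_blocks,
      Finset.sum_congr rfl (fun j _ => block_sum q a hq ha hL j)]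
    have h1 : ∀ j : Fin (q + 1), a j * 2 ^ ((j : ℕ) * q) = a' q a (j : ℕ) * 2 ^ ((j : ℕ) * q) := by
      intro j
      rw [a', dif_pos j.isLt, Fin.eta]
    rw [Finset.sum_congr rfl (fun j _ => h1 j),
      Fin.sum_univ_eq_sum_range (fun j => a' q a j * 2 ^ (j * q)), ← Finset.sum_neg_distrib]
    exact Finset.sum_congr rfl fun j _ => by ring
  · have hq1 : q = 1 := by
      by_contra h
      exact hL (Nat.clog_pos (by norm_num) (by omega))
    have hL0 : Lq q = 0 := by omega
    have hK0 : Kq q = 0 := by rw [Kq, hL0]; ring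
    have hz : ∀ j : Fin (q + 1), a j = 0 := by
      intro j
      have := ha j
      rw [hq1] at this
      simpa using abs_nonpos_iff.mp (by simpa using this)
    rw [hK0]
    simp [DD, hz]

end sums


lemma main_ind (q : ℕ) (hq : 1 ≤ q) (a : Fin (q + 1) → ℤ) (ha : ∀ j, |a j| ≤ (q : ℤ) - 1) :
    ∀ t, t ≤ Kq q → ∃ c m r, r ≤ t ∧ m ≤ t + 1 ∧ c ≤ eF q t ∧
      Ach c m (1 + DD q a t + (2 ^ Tq q - 2 ^ (Tq q - r))) := by
  intro t
  induction t with
  | zero =>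
    intro _
    refine ⟨0, 1, 0, le_refl _, le_refl _, Nat.zero_le _, ?_⟩
    have hb := Ach.base 0 1 (by norm_num)
    have hzz : (1:ℤ) + DD q a 0 + (2 ^ Tq q - 2 ^ (Tq q - 0)) = 2 ^ 1 - 2 ^ 0 := by
      simp [DD]
    rw [hzz]
    exact hb
  | succ t ih =>
    intro ht
    obtain ⟨c, m, r, hr, hm, hc, hach⟩ := ih (by omega)
    have htK : t < Kq q := ht
    have hDsucc : DD q a (t + 1) = DD q a t + dig q a t * 2 ^ eF q t := Finset.sum_range_succ _ _
    have heFm : eF q t ≤ eF q (t + 1) := eF_mono q hq ht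
    have hA := eF_lt_bound q hq htK
    have hL1 : 1 ≤ Lq q := by
      by_contra h
      have hL0 : Lq q = 0 := by omega
      rw [Kq, hL0] at htK
      omega
    have hfA := factA q hq hL1
    have hT1 : Tq q + 1 = 3 * q ^ 2 := by
      have h1 : 1 ≤ q ^ 2 := Nat.one_le_pow _ _ (by omega)
      rw [Tq]; omega
    have hqq : q * q = q ^ 2 := by ring
    have hkey : eF q t + r + 2 ≤ Tq q := by
      have h5 : r + 1 ≤ Kq q := by omega
      linarith [hA, hfA, h5]
    by_cases hbit : (a' q a (t / Lq q)).natAbs.testBit (t % Lq q)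
    · have hne : a' q a (t / Lq q) ≠ 0 := by
        intro h0
        rw [h0] at hbit
        simp [Int.natAbs_zero, Nat.zero_testBit] at hbit
      rcases lt_trichotomy (a' q a (t / Lq q)) 0 with hneg | hzero | hpos
      · have hdig : dig q a t = 1 := by
          rw [dig, if_pos hbit, Int.sign_eq_neg_one_of_neg hneg]; ring
        refine ⟨eF q t, m + 1, r, by omega, by omega, heFm, ?_⟩
        have hstep := hach.step (eF q t) (eF q t + 1) hc (by omega) (Or.inr (by omega))
        have hval : 1 + DD q a (t + 1) + (2 ^ Tq q - 2 ^ (Tq q - r))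
            = 1 + DD q a t + (2 ^ Tq q - 2 ^ (Tq q - r)) + 2 ^ (eF q t + 1) - 2 ^ eF q t := by
          rw [hDsucc, hdig, pow_succ]
          ring
        rw [hval]
        exact hstep
      · exact absurd hzero hne
      · have hdig : dig q a t = -1 := by
          rw [dig, if_pos hbit, Int.sign_eq_one_of_pos hpos]; ring
        refine ⟨eF q t, m + 1, r + 1, by omega, by omega, heFm, ?_⟩
        have hstep := hach.step (eF q t) (Tq q - (r + 1)) hc (by omega) (Or.inr (by omega))
        have hsplit : Tq q - r = (Tq q - (r + 1)) + 1 := by omega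
        have hval : 1 + DD q a (t + 1) + (2 ^ Tq q - 2 ^ (Tq q - (r + 1)))
            = 1 + DD q a t + (2 ^ Tq q - 2 ^ (Tq q - r)) + 2 ^ (Tq q - (r + 1)) - 2 ^ eF q t := by
          rw [hDsucc, hdig, hsplit, pow_succ]
          ring
        rw [hval]
        exact hstep
    · have hdig : dig q a t = 0 := by
        rw [dig, if_neg hbit]; ring
      refine ⟨c, m, r, by omega, by omega, le_trans hc heFm, ?_⟩
      rw [hDsucc, hdig]
      simpa using hach

end AlphaProof

/-- Numbers of the special form `2^(3q²-1) - Σ a_j 2^(jq) + 1` with small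
coefficients have a small number of ideal generators. -/
theorem alpha_special_form (q : ℕ) (hq : 1 ≤ q) (a : Fin (q + 1) → ℤ)
    (ha : ∀ j, |a j| ≤ (q : ℤ) - 1) :
    alpha ((2 ^ (3 * q ^ 2 - 1) - ∑ j, a j * 2 ^ ((j : ℕ) * q) + 1).toNat) ≤
      (q + 1) * Nat.clog 2 q + 3 := by
  open AlphaProof in
  obtain ⟨c, m, r, hr, hm, hc, hach⟩ := AlphaProof.main_ind q hq a ha (Kq q) le_rfl
  have hfB := AlphaProof.factB q hq
  have hclt : c < Tq q - r := by omega
  have hstep := hach.step (Tq q - r) (Tq q - r) (by omega) le_rfl (Or.inl hclt)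
  obtain ⟨g, n, hA, hn⟩ := AlphaProof.ach_sound hstep
  have hval : (n : ℤ) = 1 + DD q a (Kq q) + 2 ^ Tq q := by
    rw [hn]; ring
  rw [AlphaProof.DD_K q a hq ha] at hval
  have hNeq : ((2 : ℤ) ^ (3 * q ^ 2 - 1) - ∑ j, a j * 2 ^ ((j : ℕ) * q) + 1) = (n : ℤ) := by
    rw [hval]
    simp only [Tq]
    ring
  rw [hNeq, Int.toNat_natCast]
  have halpha := AlphaProof.alpha_le_of_achv hA
  have hm2 : m + 1 ≤ Kq q + 2 := by omega
  have hKq : Kq q = (q + 1) * Nat.clog 2 q := rfl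
  rw [hKq] at hm2
  linarith
end
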